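/- arXiv:2201.01074 — 11 statements merged into one kernel-verified Lean document; each statement's English description precedes it below -/
import Mathlib

section
/- Let n, p be natural numbers with 1 ≤ p < n, let V be a real n×p matrix of full column rank p, and let C be a symmetric real n×n matrix which is positive definite on the orthogonal complement of the column space of V (i.e. xᵀCx > 0 for every nonzero x ∈ ℝⁿ with Vᵀx = 0). Then there exist ε₀ > 0 and a sequence of symmetric real n×n matrices B₀, B₁, B₂, … such that for every ε with 0 < ε < ε₀ the matrix A(ε) = VVᵀ + εC is invertible, the series Σ_{i≥0} εⁱ Bᵢ converges, and A(ε)⁻¹ = ε⁻¹ Σ_{i≥0} εⁱ Bᵢ; moreover the coefficients satisfy the master equations VVᵀB₀ = 0 and, for every i ≥ 1, VVᵀBᵢ + C B_{i−1} = I if i = 1 and VVᵀBᵢ + C B_{i−1} = 0 if i > 1. -/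
open Matrix

set_option maxHeartbeats 1000000 in
/-- **Laurent expansion of `(VVᵀ + εC)⁻¹` (Theorem: Laurent expansion).**
If `V` is an `n × p` real matrix of full column rank (`1 ≤ p < n`) and `C` is a
symmetric `n × n` matrix positive definite on the orthogonal complement of the
column space of `V`, then for sufficiently small `ε > 0` the matrix
`A(ε) = VVᵀ + εC` is invertible, and `A(ε)⁻¹ = ε⁻¹ ∑_{i≥0} εⁱ Bᵢ` where the
symmetric coefficients `Bᵢ` satisfy the master equations. -/
theorem laurent_expansion_of_perturbed_gram
    (n p : ℕ) (hp : 1 ≤ p) (hpn : p < n)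
    (V : Matrix (Fin n) (Fin p) ℝ) (hV : V.rank = p)
    (C : Matrix (Fin n) (Fin n) ℝ) (hC : C.IsSymm)
    (hCpos : ∀ x : Fin n → ℝ, x ≠ 0 → Vᵀ *ᵥ x = 0 → 0 < x ⬝ᵥ (C *ᵥ x)) :
    ∃ ε₀ : ℝ, 0 < ε₀ ∧ ∃ B : ℕ → Matrix (Fin n) (Fin n) ℝ,
      (∀ i, (B i).IsSymm) ∧
      V * Vᵀ * B 0 = 0 ∧
      (∀ i : ℕ, 1 ≤ i →
        V * Vᵀ * B i + C * B (i - 1) = if i = 1 then 1 else 0) ∧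
      ∀ ε : ℝ, 0 < ε → ε < ε₀ →
        IsUnit (V * Vᵀ + ε • C) ∧
        ∃ S : Matrix (Fin n) (Fin n) ℝ,
          HasSum (fun i : ℕ => ε ^ i • B i) S ∧
          (V * Vᵀ + ε • C)⁻¹ = ε⁻¹ • S := by
  classical
  have hCs : Cᵀ = C := hC
  -- V has trivial kernel
  have hVinj : ∀ z : Fin p → ℝ, V *ᵥ z = 0 → z = 0 := by
    have hrank : Module.finrank ℝ (LinearMap.range V.mulVecLin) = p := hV
    have h1 : Module.finrank ℝ (LinearMap.range V.mulVecLin)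
        + Module.finrank ℝ (LinearMap.ker V.mulVecLin) = p := by
      rw [LinearMap.finrank_range_add_finrank_ker, Module.finrank_fin_fun]
    have h2 : LinearMap.ker V.mulVecLin = ⊥ := Submodule.finrank_eq_zero.mp (by omega)
    intro z hz
    have hz' : z ∈ LinearMap.ker V.mulVecLin := by
      simpa [LinearMap.mem_ker, Matrix.mulVecLin_apply] using hz
    simpa [h2] using hz'
  -- Vᵀ V invertible
  have hGker : ∀ z : Fin p → ℝ, (Vᵀ * V) *ᵥ z = 0 → z = 0 := by
    intro z hz
    apply hVinj
    have h0 : (V *ᵥ z) ⬝ᵥ (V *ᵥ z) = 0 := by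
      rw [dotProduct_mulVec, ← Matrix.mulVec_transpose, Matrix.mulVec_mulVec, hz,
        zero_dotProduct]
    exact dotProduct_self_eq_zero.mp h0
  have hGunit : IsUnit (Vᵀ * V) := by
    apply Matrix.mulVec_injective_iff_isUnit.mp
    intro x y hxy
    have h0 : (Vᵀ * V) *ᵥ (x - y) = 0 := by
      rw [Matrix.mulVec_sub, show (Vᵀ * V) *ᵥ x = (Vᵀ * V) *ᵥ y from hxy, sub_self]
    exact sub_eq_zero.mp (hGker _ h0)
  have hGdet : IsUnit (Vᵀ * V).det := (Matrix.isUnit_iff_isUnit_det _).mp hGunit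
  obtain ⟨Gi, hGidef⟩ : ∃ X : Matrix (Fin p) (Fin p) ℝ, X = (Vᵀ * V)⁻¹ := ⟨_, rfl⟩
  have hGiG : Gi * (Vᵀ * V) = 1 := by rw [hGidef]; exact Matrix.nonsing_inv_mul _ hGdet
  have hGGi : (Vᵀ * V) * Gi = 1 := by rw [hGidef]; exact Matrix.mul_nonsing_inv _ hGdet
  have hGit : Giᵀ = Gi := by
    rw [hGidef, Matrix.transpose_nonsing_inv, Matrix.transpose_mul, Matrix.transpose_transpose]
  obtain ⟨W, hWdef⟩ : ∃ X : Matrix (Fin n) (Fin n) ℝ, X = V * Vᵀ := ⟨_, rfl⟩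
  have hWt : Wᵀ = W := by rw [hWdef, Matrix.transpose_mul, Matrix.transpose_transpose]
  obtain ⟨P, hPdef⟩ : ∃ X : Matrix (Fin n) (Fin n) ℝ, X = 1 - V * Gi * Vᵀ := ⟨_, rfl⟩
  have hPV : P * V = 0 := by
    rw [hPdef, Matrix.sub_mul, Matrix.one_mul, Matrix.mul_assoc (V * Gi), Matrix.mul_assoc V,
      hGiG, Matrix.mul_one, sub_self]
  have hVtP : Vᵀ * P = 0 := by
    rw [hPdef, Matrix.mul_sub, Matrix.mul_one, ← Matrix.mul_assoc, ← Matrix.mul_assoc, hGGi,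
      Matrix.one_mul, sub_self]
  have hPt : Pᵀ = P := by
    rw [hPdef, transpose_sub, transpose_one, Matrix.transpose_mul, Matrix.transpose_mul,
      Matrix.transpose_transpose, hGit, Matrix.mul_assoc]
  have hPP : P * P = P := by
    nth_rewrite 2 [hPdef]
    rw [mul_sub, mul_one, ← Matrix.mul_assoc, ← Matrix.mul_assoc, hPV, Matrix.zero_mul,
      Matrix.zero_mul, sub_zero]
  have hPW : P * W = 0 := by rw [hWdef, ← Matrix.mul_assoc, hPV, Matrix.zero_mul]
  have hWP : W * P = 0 := by rw [hWdef, Matrix.mul_assoc, hVtP, Matrix.mul_zero]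
  obtain ⟨M0, hM0def⟩ : ∃ X : Matrix (Fin n) (Fin n) ℝ, X = W + P * C := ⟨_, rfl⟩
  have hPM0 : P * M0 = P * C := by
    rw [hM0def, mul_add, hPW, zero_add, ← Matrix.mul_assoc, hPP]
  -- M0 invertible
  have hM0ker : ∀ x : Fin n → ℝ, M0 *ᵥ x = 0 → x = 0 := by
    intro x hx
    by_contra hxne
    have hPCx : (P * C) *ᵥ x = 0 := by
      have h0 : P *ᵥ (M0 *ᵥ x) = 0 := by rw [hx, Matrix.mulVec_zero]
      rwa [Matrix.mulVec_mulVec, hPM0] at h0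
    have hWx : W *ᵥ x = 0 := by
      have h1 := hx
      rw [hM0def, Matrix.add_mulVec, hPCx, add_zero] at h1
      exact h1
    have hVtx : Vᵀ *ᵥ x = 0 := by
      have h0 : (Vᵀ *ᵥ x) ⬝ᵥ (Vᵀ *ᵥ x) = 0 := by
        rw [dotProduct_mulVec, ← Matrix.mulVec_transpose, Matrix.transpose_transpose,
          Matrix.mulVec_mulVec, ← hWdef, hWx, zero_dotProduct]
      exact dotProduct_self_eq_zero.mp h0
    have hPx : P *ᵥ x = x := by
      rw [hPdef, Matrix.sub_mulVec, Matrix.one_mulVec, ← Matrix.mulVec_mulVec, hVtx,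
        Matrix.mulVec_zero, sub_zero]
    have hzero : x ⬝ᵥ (C *ᵥ x) = 0 := by
      have h1 : x ⬝ᵥ ((P * C) *ᵥ x) = 0 := by rw [hPCx, dotProduct_zero]
      rw [← Matrix.mulVec_mulVec, dotProduct_mulVec, ← Matrix.mulVec_transpose, hPt, hPx] at h1
      exact h1
    have := hCpos x hxne hVtx
    linarith
  have hM0unit : IsUnit M0 := by
    apply Matrix.mulVec_injective_iff_isUnit.mp
    intro x y hxy
    have h0 : M0 *ᵥ (x - y) = 0 := by
      rw [Matrix.mulVec_sub, show M0 *ᵥ x = M0 *ᵥ y from hxy, sub_self]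
    exact sub_eq_zero.mp (hM0ker _ h0)
  have hM0det : IsUnit M0.det := (Matrix.isUnit_iff_isUnit_det _).mp hM0unit
  obtain ⟨N, hNdef⟩ : ∃ X : Matrix (Fin n) (Fin n) ℝ, X = M0⁻¹ := ⟨_, rfl⟩
  have hM0N : M0 * N = 1 := by rw [hNdef]; exact Matrix.mul_nonsing_inv _ hM0det
  have hNM0 : N * M0 = 1 := by rw [hNdef]; exact Matrix.nonsing_inv_mul _ hM0det
  obtain ⟨M1, hM1def⟩ : ∃ X : Matrix (Fin n) (Fin n) ℝ, X = (1 - P) * C := ⟨_, rfl⟩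
  obtain ⟨S, hSdef⟩ : ∃ X : Matrix (Fin n) (Fin n) ℝ, X = -(M1 * N) := ⟨_, rfl⟩
  have hPM1 : P * M1 = 0 := by
    rw [hM1def, ← Matrix.mul_assoc, mul_sub, mul_one, hPP, sub_self, Matrix.zero_mul]
  have hPS : P * S = 0 := by
    rw [hSdef, mul_neg, ← Matrix.mul_assoc, hPM1, Matrix.zero_mul, neg_zero]
  have h1PM0 : (1 - P) * M0 = W := by
    rw [sub_mul, one_mul, hPM0, hM0def, add_sub_cancel_right]
  have hWN : W * N = 1 - P := by rw [← h1PM0, Matrix.mul_assoc, hM0N, Matrix.mul_one]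
  have hM1N : M1 * N = -S := by rw [hSdef, neg_neg]
  have hCN : C * N = P - S := by
    have hCdecomp : C = (M0 - W) + M1 := by rw [hM0def, hM1def]; noncomm_ring
    calc C * N = ((M0 - W) + M1) * N := by rw [← hCdecomp]
      _ = M0 * N - W * N + M1 * N := by rw [add_mul, sub_mul]
      _ = 1 - (1 - P) + -S := by rw [hM0N, hWN, hM1N]
      _ = P - S := by noncomm_ring
  have hSM0 : S * M0 = -M1 := by
    rw [hSdef, neg_mul, Matrix.mul_assoc, hNM0, Matrix.mul_one]
  -- power lemmas
  have hPSX : ∀ X : Matrix (Fin n) (Fin n) ℝ, P * (S * X) = 0 := by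
    intro X; rw [← Matrix.mul_assoc, hPS, Matrix.zero_mul]
  have hPSpow : ∀ (k : ℕ) (X : Matrix (Fin n) (Fin n) ℝ), P * (S ^ (k + 1) * X) = 0 := by
    intro k X
    rw [pow_succ', Matrix.mul_assoc, hPSX]
  have hPS1P : ∀ k : ℕ, P * (S ^ k * (1 - P)) = 0 := by
    intro k
    cases k with
    | zero => rw [pow_zero, one_mul, mul_sub, mul_one, hPP, sub_self]
    | succ k => exact hPSpow k _
  -- the (unsymmetrized) coefficients
  obtain ⟨Bf, hBf0, hBfs⟩ : ∃ Bf : ℕ → Matrix (Fin n) (Fin n) ℝ, Bf 0 = N * P ∧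
      ∀ k, Bf (k + 1) = N * (S ^ (k + 1) * P) + N * (S ^ k * (1 - P)) :=
    ⟨fun i => Nat.casesOn i (N * P)
      (fun k => N * (S ^ (k + 1) * P) + N * (S ^ k * (1 - P))), rfl, fun k => rfl⟩
  have hWNX : ∀ X : Matrix (Fin n) (Fin n) ℝ, W * (N * X) = (1 - P) * X := by
    intro X; rw [← Matrix.mul_assoc, hWN]
  have hCNX : ∀ X : Matrix (Fin n) (Fin n) ℝ, C * (N * X) = (P - S) * X := by
    intro X; rw [← Matrix.mul_assoc, hCN]
  -- left master equations
  have hL0 : W * Bf 0 = 0 := by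
    rw [hBf0, ← Matrix.mul_assoc, hWN, sub_mul, one_mul, hPP, sub_self]
  have hL1 : W * Bf 1 + C * Bf 0 = 1 := by
    rw [show (1:ℕ) = 0 + 1 from rfl, hBfs 0, hBf0, mul_add, hWNX, hWNX, hCNX]
    rw [zero_add, pow_zero, pow_one, one_mul]
    rw [sub_mul, one_mul, ← Matrix.mul_assoc P S P, hPS, Matrix.zero_mul, sub_zero]
    rw [sub_mul, one_mul, mul_sub, mul_one, hPP, sub_self, sub_zero]
    rw [sub_mul, hPP]
    noncomm_ring
  have hLsucc : ∀ k : ℕ, W * Bf (k + 1 + 1) + C * Bf (k + 1) = 0 := by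
    intro k
    rw [hBfs (k + 1), hBfs k, mul_add, mul_add, hWNX, hWNX, hCNX, hCNX]
    have t1 : (1 - P) * (S ^ (k + 1 + 1) * P) = S ^ (k + 1 + 1) * P := by
      rw [sub_mul, one_mul, hPSpow (k + 1) P, sub_zero]
    have t2 : (1 - P) * (S ^ (k + 1) * (1 - P)) = S ^ (k + 1) * (1 - P) := by
      rw [sub_mul, one_mul, hPSpow k (1 - P), sub_zero]
    have t3 : (P - S) * (S ^ (k + 1) * P) = -(S ^ (k + 1 + 1) * P) := by
      rw [sub_mul, hPSpow k P, zero_sub, ← Matrix.mul_assoc, ← pow_succ']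
    have t4 : (P - S) * (S ^ k * (1 - P)) = -(S ^ (k + 1) * (1 - P)) := by
      rw [sub_mul, hPS1P k, zero_sub, ← Matrix.mul_assoc, ← pow_succ']
    rw [t1, t2, t3, t4]
    abel
  -- right master equations
  have hR0 : Bf 0 * W = 0 := by rw [hBf0, Matrix.mul_assoc, hPW, Matrix.mul_zero]
  have hR1 : Bf 1 * W + Bf 0 * C = 1 := by
    rw [show (1:ℕ) = 0 + 1 from rfl, hBfs 0, hBf0, add_mul, zero_add, pow_zero, pow_one, one_mul]
    rw [Matrix.mul_assoc N (S * P) W, Matrix.mul_assoc S P W, hPW, Matrix.mul_zero,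
      Matrix.mul_zero, zero_add]
    rw [Matrix.mul_assoc N (1 - P) W, sub_mul, one_mul, hPW, sub_zero]
    rw [Matrix.mul_assoc N P C, ← mul_add, ← hM0def, hNM0]
  have hRsucc : ∀ k : ℕ, Bf (k + 1 + 1) * W + Bf (k + 1) * C = 0 := by
    intro k
    rw [hBfs (k + 1), hBfs k, add_mul, add_mul]
    rw [Matrix.mul_assoc N _ W, Matrix.mul_assoc (S ^ (k + 1 + 1)) P W, hPW, Matrix.mul_zero,
      Matrix.mul_zero, zero_add]
    rw [Matrix.mul_assoc N (S ^ (k + 1) * (1 - P)) W, Matrix.mul_assoc (S ^ (k + 1)) (1 - P) W,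
      sub_mul, one_mul, hPW, sub_zero]
    rw [Matrix.mul_assoc N (S ^ (k + 1) * P) C, Matrix.mul_assoc (S ^ (k + 1)) P C]
    rw [Matrix.mul_assoc N (S ^ k * (1 - P)) C, Matrix.mul_assoc (S ^ k) (1 - P) C, ← hM1def]
    have h1 : S ^ (k + 1) * W + S ^ (k + 1) * (P * C) = S ^ (k + 1) * M0 := by
      rw [← mul_add, ← hM0def]
    have h2 : S ^ (k + 1) * M0 = -(S ^ k * M1) := by
      rw [pow_succ, Matrix.mul_assoc, hSM0, mul_neg]
    calc N * (S ^ (k + 1) * W) + (N * (S ^ (k + 1) * (P * C)) + N * (S ^ k * M1))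
        = N * (S ^ (k + 1) * W + S ^ (k + 1) * (P * C)) + N * (S ^ k * M1) := by
          rw [mul_add]; abel
      _ = N * (-(S ^ k * M1)) + N * (S ^ k * M1) := by rw [h1, h2]
      _ = 0 := by rw [mul_neg, neg_add_cancel]
  -- symmetrized coefficients and conclusion
  rw [← hWdef]
  letI : NormedRing (Matrix (Fin n) (Fin n) ℝ) := Matrix.linftyOpNormedRing
  letI : NormedAlgebra ℝ (Matrix (Fin n) (Fin n) ℝ) := Matrix.linftyOpNormedAlgebra
  haveI : CompleteSpace (Matrix (Fin n) (Fin n) ℝ) :=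
    FiniteDimensional.complete ℝ (Matrix (Fin n) (Fin n) ℝ)
  have hLj : ∀ j : ℕ, W * Bf (j + 1) + C * Bf j = if j = 0 then 1 else 0 := by
    intro j
    cases j with
    | zero => simpa using hL1
    | succ k => simpa using hLsucc k
  have hRj : ∀ j : ℕ, Bf (j + 1) * W + Bf j * C = if j = 0 then 1 else 0 := by
    intro j
    cases j with
    | zero => simpa using hR1
    | succ k => simpa using hRsucc k
  have hTj : ∀ j : ℕ, W * (Bf (j + 1))ᵀ + C * (Bf j)ᵀ = if j = 0 then 1 else 0 := by
    intro j
    have h := congrArg Matrix.transpose (hRj j)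
    rwa [transpose_add, Matrix.transpose_mul, Matrix.transpose_mul, hWt, hCs,
      apply_ite Matrix.transpose, transpose_one, transpose_zero] at h
  refine ⟨(‖S‖ + 1)⁻¹, by positivity,
    fun i => (2⁻¹ : ℝ) • (Bf i + (Bf i)ᵀ), ?_, ?_, ?_, ?_⟩
  · intro i
    show ((2⁻¹ : ℝ) • (Bf i + (Bf i)ᵀ))ᵀ = (2⁻¹ : ℝ) • (Bf i + (Bf i)ᵀ)
    rw [transpose_smul, transpose_add, Matrix.transpose_transpose, add_comm]
  · have hL0t : W * (Bf 0)ᵀ = 0 := by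
      have h := congrArg Matrix.transpose hR0
      rwa [Matrix.transpose_mul, hWt, transpose_zero] at h
    rw [mul_smul_comm, mul_add, hL0, hL0t, add_zero, smul_zero]
  · intro i hi
    obtain ⟨j, rfl⟩ : ∃ j, i = j + 1 := ⟨i - 1, by omega⟩
    simp only [Nat.add_sub_cancel]
    rw [mul_smul_comm, mul_smul_comm, mul_add, mul_add, ← smul_add]
    have hre : W * Bf (j + 1) + W * (Bf (j + 1))ᵀ + (C * Bf j + C * (Bf j)ᵀ)
        = (W * Bf (j + 1) + C * Bf j) + (W * (Bf (j + 1))ᵀ + C * (Bf j)ᵀ) := by abel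
    rw [hre, hLj j, hTj j]
    by_cases hj : j = 0
    · subst hj
      simp only [if_true]
      rw [← two_smul ℝ (1 : Matrix (Fin n) (Fin n) ℝ), smul_smul]
      norm_num
    · rw [if_neg hj, if_neg (by omega : ¬ j + 1 = 1), add_zero, smul_zero]
  · intro ε hε hεlt
    have hεne : ε ≠ 0 := ne_of_gt hε
    have hnorm : ‖ε • S‖ < 1 := by
      rw [norm_smul, Real.norm_eq_abs, abs_of_pos hε]
      have h1 : (0 : ℝ) < ‖S‖ + 1 := by positivity
      have h2 : ε * (‖S‖ + 1) < 1 := by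
        have h3 := mul_lt_mul_of_pos_right hεlt h1
        rwa [inv_mul_cancel₀ (ne_of_gt h1)] at h3
      nlinarith [norm_nonneg S]
    obtain ⟨Gs, hGsum⟩ : ∃ G, HasSum (fun i : ℕ => (ε • S) ^ i) G :=
      ⟨_, (summable_geometric_of_norm_lt_one hnorm).hasSum⟩
    have hGs1 : (1 - ε • S) * Gs = 1 := by
      have h := mul_neg_geom_series (ε • S) hnorm
      rw [hGsum.unique (summable_geometric_of_norm_lt_one hnorm).hasSum]; exact h
    have hSM0' : (1 - ε • S) * M0 = M0 + ε • M1 := by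
      rw [sub_mul, one_mul, smul_mul_assoc, hSM0, smul_neg, sub_neg_eq_add]
    have hfact : W + ε • C = ((1 - P) + ε • P) * ((1 - ε • S) * M0) := by
      rw [hSM0']
      have e2 : ((1 : Matrix (Fin n) (Fin n) ℝ) - P) * (ε • M1) = ε • M1 := by
        rw [mul_smul_comm, sub_mul, one_mul, hPM1, sub_zero]
      have e3 : (ε • P) * M0 = ε • (P * C) := by rw [smul_mul_assoc, hPM0]
      have e4 : (ε • P) * (ε • M1) = 0 := by
        rw [smul_mul_assoc, mul_smul_comm, hPM1, smul_zero, smul_zero]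
      rw [mul_add, add_mul, add_mul, h1PM0, e2, e3, e4, add_zero, add_assoc, ← smul_add]
      have e5 : P * C + M1 = C := by rw [hM1def]; noncomm_ring
      rw [e5]
    have hDD : ((1 - P) + ε • P) * ((1 - P) + ε⁻¹ • P) = 1 := by
      have f1 : ((1 : Matrix (Fin n) (Fin n) ℝ) - P) * (1 - P) = 1 - P := by
        rw [sub_mul, one_mul, mul_sub, mul_one, hPP, sub_self, sub_zero]
      have f2 : ((1 : Matrix (Fin n) (Fin n) ℝ) - P) * (ε⁻¹ • P) = 0 := by
        rw [mul_smul_comm, sub_mul, one_mul, hPP, sub_self, smul_zero]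
      have f3 : (ε • P) * ((1 : Matrix (Fin n) (Fin n) ℝ) - P) = 0 := by
        rw [smul_mul_assoc, mul_sub, mul_one, hPP, sub_self, smul_zero]
      have f4 : (ε • P) * (ε⁻¹ • P) = P := by
        rw [smul_mul_assoc, mul_smul_comm, hPP, smul_smul, mul_inv_cancel₀ hεne, one_smul]
      rw [mul_add, add_mul, add_mul, f1, f2, f3, f4, add_zero, zero_add, sub_add_cancel]
    have hDunit : IsUnit ((1 - P) + ε • P) := (Matrix.isUnit_iff_isUnit_det _).mpr (Matrix.isUnit_det_of_right_inverse hDD)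
    have h1Sunit : IsUnit ((1 : Matrix (Fin n) (Fin n) ℝ) - ε • S) :=
      isUnit_one_sub_of_norm_lt_one hnorm
    have hAunit : IsUnit (W + ε • C) := by
      rw [hfact]
      exact hDunit.mul (h1Sunit.mul hM0unit)
    have hM0NX : ∀ X : Matrix (Fin n) (Fin n) ℝ, M0 * (N * X) = X := fun X => by
      rw [← Matrix.mul_assoc, hM0N, Matrix.one_mul]
    have h1SX : ∀ X : Matrix (Fin n) (Fin n) ℝ, (1 - ε • S) * (Gs * X) = X := fun X => by
      rw [← Matrix.mul_assoc, hGs1, Matrix.one_mul]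
    have hAinv : (W + ε • C)⁻¹ = N * Gs * ((1 - P) + ε⁻¹ • P) := by
      apply Matrix.inv_eq_right_inv
      rw [hfact]
      simp only [Matrix.mul_assoc]
      rw [hM0NX, h1SX]
      exact hDD
    -- the series
    have hgeoN : HasSum (fun i : ℕ => N * (ε • S) ^ i * P) (N * Gs * P) :=
      (hGsum.mul_left N).mul_right P
    have hgeoN' : HasSum (fun i : ℕ => N * (ε • S) ^ (i + 1) * P) (N * Gs * P - N * P) := by
      refine (hasSum_nat_add_iff (f := fun i : ℕ => N * (ε • S) ^ i * P) 1).mpr ?_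
      simpa [Finset.sum_range_one, Matrix.mul_one, sub_add_cancel] using hgeoN
    have hgeoN2 : HasSum (fun i : ℕ => ε • (N * (ε • S) ^ i * (1 - P)))
        (ε • (N * Gs * (1 - P))) :=
      ((hGsum.mul_left N).mul_right (1 - P)).const_smul ε
    have hBle : ∀ i : ℕ, ε ^ (i + 1) • Bf (i + 1)
        = N * (ε • S) ^ (i + 1) * P + ε • (N * (ε • S) ^ i * (1 - P)) := by
      intro i
      rw [hBfs i, smul_add]
      congr 1
      · rw [← mul_smul_comm, ← smul_mul_assoc, ← smul_pow, ← Matrix.mul_assoc]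
      · rw [pow_succ' (a := ε), mul_smul]
        congr 1
        rw [← mul_smul_comm, ← smul_mul_assoc, ← smul_pow, ← Matrix.mul_assoc]
    have hsum1 : HasSum (fun i : ℕ => ε ^ (i + 1) • Bf (i + 1))
        ((N * Gs * P - N * P) + ε • (N * Gs * (1 - P))) := by
      have h := hgeoN'.add hgeoN2
      have hf : (fun i : ℕ => ε ^ (i + 1) • Bf (i + 1))
          = fun i : ℕ => N * (ε • S) ^ (i + 1) * P + ε • (N * (ε • S) ^ i * (1 - P)) :=
        funext hBle
      rw [hf]
      exact h
    have hsumBf : HasSum (fun i : ℕ => ε ^ i • Bf i)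
        (N * Gs * P + ε • (N * Gs * (1 - P))) := by
      have h := (hasSum_nat_add_iff (f := fun i : ℕ => ε ^ i • Bf i) 1).mp hsum1
      have hr : (N * Gs * P - N * P + ε • (N * Gs * (1 - P)))
            + ∑ i ∈ Finset.range 1, ε ^ i • Bf i
          = N * Gs * P + ε • (N * Gs * (1 - P)) := by
        rw [Finset.sum_range_one, pow_zero, one_smul, hBf0]
        abel
      rwa [hr] at h
    have hsumBfT : HasSum (fun i : ℕ => ε ^ i • (Bf i)ᵀ)
        (N * Gs * P + ε • (N * Gs * (1 - P)))ᵀ := by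
      have h := hsumBf.matrix_transpose
      simpa [Matrix.transpose_smul] using h
    refine ⟨hAunit, (2⁻¹ : ℝ) • ((N * Gs * P + ε • (N * Gs * (1 - P)))
        + (N * Gs * P + ε • (N * Gs * (1 - P)))ᵀ), ?_, ?_⟩
    · have h := (hsumBf.add hsumBfT).const_smul (2⁻¹ : ℝ)
      have hf : (fun i : ℕ => ε ^ i • ((2⁻¹ : ℝ) • (Bf i + (Bf i)ᵀ)))
          = fun i : ℕ => (2⁻¹ : ℝ) • (ε ^ i • Bf i + ε ^ i • (Bf i)ᵀ) := by
        funext i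
        rw [← smul_add, smul_comm]
      rw [hf]
      exact h
    · -- inverse equals ε⁻¹ • S
      have hTinv : ε⁻¹ • (N * Gs * P + ε • (N * Gs * (1 - P)))
          = N * Gs * ((1 - P) + ε⁻¹ • P) := by
        rw [smul_add, smul_smul, inv_mul_cancel₀ hεne, one_smul, ← mul_smul_comm, mul_add]
        abel
      have hAsymm : (W + ε • C)ᵀ = W + ε • C := by
        rw [transpose_add, transpose_smul, hWt, hCs]
      have hAinvT : ((W + ε • C)⁻¹)ᵀ = (W + ε • C)⁻¹ := by
        rw [Matrix.transpose_nonsing_inv, hAsymm]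
      have hTval : N * Gs * P + ε • (N * Gs * (1 - P)) = ε • (W + ε • C)⁻¹ := by
        rw [hAinv, ← hTinv, smul_smul, mul_inv_cancel₀ hεne, one_smul]
      have hTt : (N * Gs * P + ε • (N * Gs * (1 - P)))ᵀ
          = N * Gs * P + ε • (N * Gs * (1 - P)) := by
        rw [hTval, transpose_smul, hAinvT]
      rw [hTt, ← two_smul ℝ (N * Gs * P + ε • (N * Gs * (1 - P))), smul_smul, smul_smul,
        (by ring : (ε⁻¹ * 2⁻¹ * 2 : ℝ) = ε⁻¹), hTval, smul_smul,
        inv_mul_cancel₀ hεne, one_smul]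
end

section
/- Let n, p be natural numbers with 1 ≤ p < n, let V be a real n×p matrix of full column rank, let C be a symmetric real n×n matrix positive definite on the orthogonal complement of the column space of V, and let U be any real n×(n−p) matrix whose columns form an orthonormal basis of the orthogonal complement of the column space of V. Then the (n−p)×(n−p) matrix UᵀCU is invertible, and ε·(VVᵀ + εC)⁻¹ converges to U(UᵀCU)⁻¹Uᵀ as ε → 0⁺ (in particular VVᵀ + εC is invertible for all sufficiently small ε > 0). -/
open Matrix Filter Set

private lemma matrix_eq_zero_of_mulVec_eq_zero {m k : ℕ}
    {A : Matrix (Fin m) (Fin k) ℝ} (h : ∀ v, A *ᵥ v = 0) : A = 0 := by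
  ext i j
  simpa [Matrix.mulVec_single] using congrFun (h (Pi.single j 1)) i

/-- **Leading term of the Laurent expansion.**
If `V` is `n × p` of full column rank (`1 ≤ p < n`), `C` is symmetric and positive
definite on the orthogonal complement of the column space of `V`, and the columns
of `U` form an orthonormal basis of that orthogonal complement, then `UᵀCU` is
invertible, `VVᵀ + εC` is invertible for all sufficiently small `ε > 0`, and
`ε (VVᵀ + εC)⁻¹ → U (UᵀCU)⁻¹ Uᵀ` as `ε → 0⁺`. -/
theorem laurent_leading_term
    (n p : ℕ) (hp : 1 ≤ p) (hpn : p < n)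
    (V : Matrix (Fin n) (Fin p) ℝ) (hV : V.rank = p)
    (C : Matrix (Fin n) (Fin n) ℝ) (hC : C.IsSymm)
    (hCpos : ∀ x : Fin n → ℝ, x ≠ 0 → Vᵀ *ᵥ x = 0 → 0 < x ⬝ᵥ (C *ᵥ x))
    (U : Matrix (Fin n) (Fin (n - p)) ℝ)
    (hUorth : Uᵀ * U = 1)
    (hUspan : LinearMap.range U.mulVecLin = LinearMap.ker Vᵀ.mulVecLin) :
    IsUnit (Uᵀ * C * U) ∧
    (∀ᶠ ε in nhdsWithin (0 : ℝ) (Ioi 0), IsUnit (V * Vᵀ + ε • C)) ∧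
    Tendsto (fun ε : ℝ => ε • (V * Vᵀ + ε • C)⁻¹)
      (nhdsWithin (0 : ℝ) (Ioi 0)) (nhds (U * (Uᵀ * C * U)⁻¹ * Uᵀ)) := by
  classical
  -- columns of U are in the kernel of Vᵀ
  have hVU : Vᵀ * U = 0 := by
    ext i j
    have hmem : (U *ᵥ Pi.single j 1) ∈ LinearMap.ker Vᵀ.mulVecLin := by
      rw [← hUspan]; exact ⟨Pi.single j 1, rfl⟩
    have h0 : Vᵀ *ᵥ (U *ᵥ Pi.single j 1) = 0 := hmem
    rw [Matrix.mulVec_mulVec] at h0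
    simpa [Matrix.mulVec_single] using congrFun h0 i
  have hUV : Uᵀ * V = 0 := by
    have := congrArg Matrix.transpose hVU
    simpa [Matrix.transpose_mul] using this
  -- S := Uᵀ C U is positive definite
  have hSpos : (Uᵀ * C * U).PosDef := by
    rw [Matrix.posDef_iff_dotProduct_mulVec]
    constructor
    · show (Uᵀ * C * U)ᴴ = _
      rw [Matrix.conjTranspose_eq_transpose_of_trivial]
      simp [Matrix.transpose_mul, hC.eq, Matrix.mul_assoc]
    · intro x hx
      have hUx : U *ᵥ x ≠ 0 := by
        intro h
        apply hx
        have := congrArg (fun v => Uᵀ *ᵥ v) h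
        simpa [Matrix.mulVec_mulVec, hUorth] using this
      have hker : Vᵀ *ᵥ (U *ᵥ x) = 0 := by
        rw [Matrix.mulVec_mulVec, hVU, Matrix.zero_mulVec]
      have hpos := hCpos (U *ᵥ x) hUx hker
      have hrw : x ⬝ᵥ ((Uᵀ * C * U) *ᵥ x) = (U *ᵥ x) ⬝ᵥ (C *ᵥ (U *ᵥ x)) := by
        rw [← Matrix.mulVec_mulVec, ← Matrix.mulVec_mulVec,
          Matrix.dotProduct_mulVec, Matrix.vecMul_transpose]
      simpa [hrw] using hpos
  have hSu : IsUnit (Uᵀ * C * U) := hSpos.isUnit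
  have hSd : IsUnit (Uᵀ * C * U).det := (Matrix.isUnit_iff_isUnit_det _).mp hSu
  have hSS : (Uᵀ * C * U) * (Uᵀ * C * U)⁻¹ = 1 := Matrix.mul_nonsing_inv _ hSd
  -- V has injective mulVec
  have hVinj : Function.Injective V.mulVec := by
    have hker : LinearMap.ker V.mulVecLin = ⊥ := by
      have hrn := LinearMap.finrank_range_add_finrank_ker V.mulVecLin
      rw [show Module.finrank ℝ (LinearMap.range V.mulVecLin) = p from hV] at hrn
      have hd : Module.finrank ℝ (Fin p → ℝ) = p := by simp
      rw [hd] at hrn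
      have : Module.finrank ℝ (LinearMap.ker V.mulVecLin) = 0 := by omega
      exact Submodule.finrank_eq_zero.mp this
    intro x y hxy
    have : V.mulVecLin x = V.mulVecLin y := hxy
    exact LinearMap.ker_eq_bot.mp hker this
  -- G := Vᵀ V is positive definite
  have hGpos : (Vᵀ * V).PosDef := by
    rw [Matrix.posDef_iff_dotProduct_mulVec]
    constructor
    · show (Vᵀ * V)ᴴ = _
      rw [Matrix.conjTranspose_eq_transpose_of_trivial]
      simp [Matrix.transpose_mul]
    · intro x hx
      have hVx : V *ᵥ x ≠ 0 := fun h => hx (hVinj (by simpa using h))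
      have hrw : x ⬝ᵥ ((Vᵀ * V) *ᵥ x) = (V *ᵥ x) ⬝ᵥ (V *ᵥ x) := by
        rw [← Matrix.mulVec_mulVec, Matrix.dotProduct_mulVec, Matrix.vecMul_transpose]
      have hnn : 0 ≤ (V *ᵥ x) ⬝ᵥ (V *ᵥ x) :=
        Finset.sum_nonneg fun i _ => mul_self_nonneg _
      have hne : (V *ᵥ x) ⬝ᵥ (V *ᵥ x) ≠ 0 :=
        fun h => hVx (dotProduct_self_eq_zero.mp h)
      simpa [hrw] using lt_of_le_of_ne hnn (Ne.symm hne)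
  have hGd : IsUnit (Vᵀ * V).det := (Matrix.isUnit_iff_isUnit_det _).mp hGpos.isUnit
  have hGG : (Vᵀ * V) * (Vᵀ * V)⁻¹ = 1 := Matrix.mul_nonsing_inv _ hGd
  -- projections
  have eVP : Vᵀ * (V * (Vᵀ * V)⁻¹ * Vᵀ) = Vᵀ := by
    rw [← Matrix.mul_assoc, ← Matrix.mul_assoc, hGG, Matrix.one_mul]
  have eVQ : Vᵀ * (U * Uᵀ) = 0 := by
    rw [← Matrix.mul_assoc, hVU, Matrix.zero_mul]
  have eUP : Uᵀ * (V * (Vᵀ * V)⁻¹ * Vᵀ) = 0 := by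
    rw [← Matrix.mul_assoc, ← Matrix.mul_assoc, hUV, Matrix.zero_mul, Matrix.zero_mul]
  have eUQ : Uᵀ * (U * Uᵀ) = Uᵀ := by
    rw [← Matrix.mul_assoc, hUorth, Matrix.one_mul]
  set P : Matrix (Fin n) (Fin n) ℝ := V * (Vᵀ * V)⁻¹ * Vᵀ with hPdef
  set Q : Matrix (Fin n) (Fin n) ℝ := U * Uᵀ with hQdef
  have hPP : P * P = P := by
    conv_lhs => rw [hPdef, Matrix.mul_assoc]
    rw [eVP]
  have hQQ : Q * Q = Q := by
    conv_lhs => rw [hQdef, Matrix.mul_assoc]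
    rw [eUQ]
  have hPQ : P * Q = 0 := by
    conv_lhs => rw [hPdef, Matrix.mul_assoc]
    rw [eVQ, Matrix.mul_zero]
  have hQP : Q * P = 0 := by
    conv_lhs => rw [hQdef, Matrix.mul_assoc]
    rw [eUP, Matrix.mul_zero]
  have hMM : (P + Q) * (P + Q) = P + Q := by
    rw [Matrix.add_mul, Matrix.mul_add, Matrix.mul_add, hPP, hQQ, hPQ, hQP]
    abel
  have hVPQ : Vᵀ * (P + Q) = Vᵀ := by
    rw [Matrix.mul_add, eVP, eVQ, add_zero]
  have hUPQ : Uᵀ * (P + Q) = Uᵀ := by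
    rw [Matrix.mul_add, eUP, eUQ, zero_add]
  have hMinj : ∀ x : Fin n → ℝ, (P + Q) *ᵥ x = 0 → x = 0 := by
    intro x hx
    have h1 : Vᵀ *ᵥ x = 0 := by
      have := congrArg (fun v => Vᵀ *ᵥ v) hx
      simpa [Matrix.mulVec_mulVec, hVPQ] using this
    have h2 : Uᵀ *ᵥ x = 0 := by
      have := congrArg (fun v => Uᵀ *ᵥ v) hx
      simpa [Matrix.mulVec_mulVec, hUPQ] using this
    obtain ⟨z, hz⟩ : x ∈ LinearMap.range U.mulVecLin := by
      rw [hUspan]; exact h1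
    have hz' : U *ᵥ z = x := hz
    have : z = 0 := by
      have := congrArg (fun v => Uᵀ *ᵥ v) hz'
      simp only [Matrix.mulVec_mulVec, hUorth, Matrix.one_mulVec] at this
      rw [this, h2]
    rw [← hz', this, Matrix.mulVec_zero]
  have hPQ1 : P + Q = 1 := by
    have h0 : (P + Q) * ((P + Q) - 1) = 0 := by
      rw [Matrix.mul_sub, hMM, Matrix.mul_one, sub_self]
    have hz : ((P + Q) - 1) = 0 := by
      apply matrix_eq_zero_of_mulVec_eq_zero
      intro v
      apply hMinj
      rw [Matrix.mulVec_mulVec, h0, Matrix.zero_mulVec]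
    linear_combination (norm := abel) hz
  -- the leading matrix B and correction A₀
  set B : Matrix (Fin n) (Fin n) ℝ := U * (Uᵀ * C * U)⁻¹ * Uᵀ with hBdef
  have hUCB : Uᵀ * (C * B) = Uᵀ := by
    have h1 : Uᵀ * (C * B) = (Uᵀ * C * U) * ((Uᵀ * C * U)⁻¹ * Uᵀ) := by
      rw [hBdef]; simp only [Matrix.mul_assoc]
    rw [h1, ← Matrix.mul_assoc, hSS, Matrix.one_mul]
  have hQCB : Q * (1 - C * B) = 0 := by
    have : Q * (1 - C * B) = U * (Uᵀ * (1 - C * B)) := by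
      rw [hQdef, Matrix.mul_assoc]
    rw [this, Matrix.mul_sub, Matrix.mul_one, hUCB, sub_self, Matrix.mul_zero]
  have key2 : (V * Vᵀ) * B = 0 := by
    have : (V * Vᵀ) * B = V * ((Vᵀ * U) * ((Uᵀ * C * U)⁻¹ * Uᵀ)) := by
      rw [hBdef]; simp only [Matrix.mul_assoc]
    rw [this, hVU, Matrix.zero_mul, Matrix.mul_zero]
  set A0 : Matrix (Fin n) (Fin n) ℝ :=
    V * (Vᵀ * V)⁻¹ * ((Vᵀ * V)⁻¹ * (Vᵀ * (1 - C * B))) with hA0def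
  have key1 : (V * Vᵀ) * A0 + C * B = 1 := by
    have h1 : (V * Vᵀ) * A0 = P * (1 - C * B) := by
      rw [hA0def, hPdef]
      calc (V * Vᵀ) * (V * (Vᵀ * V)⁻¹ * ((Vᵀ * V)⁻¹ * (Vᵀ * (1 - C * B))))
          = V * ((Vᵀ * V) * ((Vᵀ * V)⁻¹ * ((Vᵀ * V)⁻¹ * (Vᵀ * (1 - C * B))))) := by
            simp only [Matrix.mul_assoc]
        _ = V * ((Vᵀ * V)⁻¹ * (Vᵀ * (1 - C * B))) := by
            rw [← Matrix.mul_assoc (Vᵀ * V), hGG, Matrix.one_mul]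
        _ = V * (Vᵀ * V)⁻¹ * Vᵀ * (1 - C * B) := by simp only [Matrix.mul_assoc]
    have h2 : P * (1 - C * B) = 1 - C * B := by
      have hP1Q : P = 1 - Q := by linear_combination (norm := abel) hPQ1
      rw [hP1Q, Matrix.sub_mul, Matrix.one_mul, hQCB, sub_zero]
    rw [h1, h2]; abel
  -- main algebraic identity
  have hMain : ∀ ε : ℝ, (V * Vᵀ + ε • C) * (ε • A0 + B)
      = ε • (1 + ε • (C * A0)) := by
    intro ε
    rw [Matrix.add_mul, Matrix.mul_add, Matrix.mul_add, Matrix.mul_smul,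
      Matrix.smul_mul, Matrix.smul_mul, Matrix.mul_smul, key2, ← key1]
    rw [smul_add, smul_add, smul_smul]
    module
  -- continuity / eventual invertibility of 1 + ε • C A0
  have hcont : Continuous fun ε : ℝ => (1 : Matrix (Fin n) (Fin n) ℝ) + ε • (C * A0) :=
    continuous_const.add (continuous_id.smul continuous_const)
  have hdetne : ∀ᶠ ε in nhds (0 : ℝ),
      ((1 : Matrix (Fin n) (Fin n) ℝ) + ε • (C * A0)).det ≠ 0 := by
    have hc : ContinuousAt (fun ε : ℝ =>
        ((1 : Matrix (Fin n) (Fin n) ℝ) + ε • (C * A0)).det) 0 :=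
      (hcont.matrix_det).continuousAt
    have h0 : ((1 : Matrix (Fin n) (Fin n) ℝ) + (0 : ℝ) • (C * A0)).det = 1 := by simp
    have := hc.eventually_ne (by rw [h0]; exact one_ne_zero)
    exact this
  have hinvcont : ContinuousAt
      (fun ε : ℝ => ((1 : Matrix (Fin n) (Fin n) ℝ) + ε • (C * A0))⁻¹) 0 := by
    have h1 : ContinuousAt Inv.inv ((1 : Matrix (Fin n) (Fin n) ℝ) + (0 : ℝ) • (C * A0)) := by
      apply continuousAt_matrix_inv
      have h0 : ((1 : Matrix (Fin n) (Fin n) ℝ) + (0 : ℝ) • (C * A0)).det = 1 := by simp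
      rw [h0]
      exact NormedRing.inverse_continuousAt (1 : ℝˣ)
    exact ContinuousAt.comp (g := Inv.inv)
      (f := fun ε : ℝ => (1 : Matrix (Fin n) (Fin n) ℝ) + ε • (C * A0)) (x := (0:ℝ))
      h1 hcont.continuousAt
  have htend0 : Tendsto
      (fun ε : ℝ => (ε • A0 + B) * ((1 : Matrix (Fin n) (Fin n) ℝ) + ε • (C * A0))⁻¹)
      (nhds 0) (nhds (U * (Uᵀ * C * U)⁻¹ * Uᵀ)) := by
    have hc2 : ContinuousAt (fun ε : ℝ => ε • A0 + B) 0 :=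
      ((continuous_id.smul continuous_const).add continuous_const).continuousAt
    have := hc2.mul hinvcont
    have hval : ((0 : ℝ) • A0 + B) * ((1 : Matrix (Fin n) (Fin n) ℝ) + (0 : ℝ) • (C * A0))⁻¹
        = U * (Uᵀ * C * U)⁻¹ * Uᵀ := by
      rw [hBdef]; simp
    have h3 := this.tendsto
    rw [Pi.mul_apply, hval] at h3
    exact h3
  -- eventually on the right-neighborhood
  have hev : ∀ᶠ ε in nhdsWithin (0 : ℝ) (Ioi 0),
      ((1 : Matrix (Fin n) (Fin n) ℝ) + ε • (C * A0)).det ≠ 0 ∧ 0 < ε :=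
    ((hdetne.filter_mono nhdsWithin_le_nhds).and eventually_mem_nhdsWithin)
  have hkey : ∀ ε : ℝ, ((1 : Matrix (Fin n) (Fin n) ℝ) + ε • (C * A0)).det ≠ 0 → 0 < ε →
      IsUnit (V * Vᵀ + ε • C) ∧
      ε • (V * Vᵀ + ε • C)⁻¹
        = (ε • A0 + B) * ((1 : Matrix (Fin n) (Fin n) ℝ) + ε • (C * A0))⁻¹ := by
    intro ε hdet hε
    have hD : ((1 : Matrix (Fin n) (Fin n) ℝ) + ε • (C * A0))
        * ((1 : Matrix (Fin n) (Fin n) ℝ) + ε • (C * A0))⁻¹ = 1 :=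
      Matrix.mul_nonsing_inv _ hdet.isUnit
    have hNx : (V * Vᵀ + ε • C) * ((ε • A0 + B)
        * ((1 : Matrix (Fin n) (Fin n) ℝ) + ε • (C * A0))⁻¹) = ε • 1 := by
      rw [← Matrix.mul_assoc, hMain ε, Matrix.smul_mul, hD]
    have hright : (V * Vᵀ + ε • C) * (ε⁻¹ • ((ε • A0 + B)
        * ((1 : Matrix (Fin n) (Fin n) ℝ) + ε • (C * A0))⁻¹)) = 1 := by
      rw [Matrix.mul_smul, hNx, smul_smul, inv_mul_cancel₀ hε.ne', one_smul]
    refine ⟨(Matrix.isUnit_iff_isUnit_det _).mpr (Matrix.isUnit_det_of_right_inverse hright), ?_⟩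
    rw [Matrix.inv_eq_right_inv hright, smul_smul, mul_inv_cancel₀ hε.ne', one_smul]
  refine ⟨hSu, hev.mono fun ε h => (hkey ε h.1 h.2).1, ?_⟩
  apply Tendsto.congr' _ (htend0.mono_left nhdsWithin_le_nhds)
  exact hev.mono fun ε h => ((hkey ε h.1 h.2).2).symm
end

section
/- Let V be a real n×p matrix of full column rank with 1 ≤ p < n, let Q be a matrix whose columns form an orthonormal basis of the column space of V, let L be a symmetric real n×n matrix such that L̃ := (I − QQᵀ) L (I − QQᵀ) is positive semidefinite, and let σ² > 0. Then for all sufficiently small ε > 0 the matrix ε(L + σ²I) + VVᵀ is invertible, and there exists a constant c ≥ 0 such that for all sufficiently small ε > 0, ‖(εL + VVᵀ)(ε(L + σ²I) + VVᵀ)⁻¹ − (QQᵀ + L̃(L̃ + σ²I)⁻¹)‖ ≤ c·ε. In particular the smoother matrix M_ε = (L + ε⁻¹VVᵀ)(L + σ²I + ε⁻¹VVᵀ)⁻¹ converges to QQᵀ + L̃(L̃ + σ²I)⁻¹ as ε → 0⁺. -/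
open Matrix Filter Set

attribute [local instance] Matrix.normedAddCommGroup
attribute [local instance] Matrix.normedSpace

set_option maxHeartbeats 1000000

/-- **Flat limit of the smoother matrix of a semi-parametric model.**
Let `V` be `n × p` of full column rank (`1 ≤ p < n`), `Q` an orthonormal basis of
the column space of `V`, `L` symmetric with `L̃ = (I − QQᵀ) L (I − QQᵀ)` positive
semidefinite, and `σ² > 0`. Then for small `ε > 0` the matrix
`ε(L + σ²I) + VVᵀ` is invertible, the smoother matrix
`(εL + VVᵀ)(ε(L + σ²I) + VVᵀ)⁻¹ = (L + ε⁻¹VVᵀ)(L + σ²I + ε⁻¹VVᵀ)⁻¹`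
is within `c·ε` of `QQᵀ + L̃(L̃ + σ²I)⁻¹`, and in particular converges to it
as `ε → 0⁺`. -/
theorem smoother_matrix_flat_limit
    (n p : ℕ) (hp : 1 ≤ p) (hpn : p < n)
    (V : Matrix (Fin n) (Fin p) ℝ) (hV : V.rank = p)
    (Q : Matrix (Fin n) (Fin p) ℝ) (hQorth : Qᵀ * Q = 1)
    (hQspan : LinearMap.range Q.mulVecLin = LinearMap.range V.mulVecLin)
    (L : Matrix (Fin n) (Fin n) ℝ) (hL : L.IsSymm)
    (Lt : Matrix (Fin n) (Fin n) ℝ)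
    (hLt : Lt = (1 - Q * Qᵀ) * L * (1 - Q * Qᵀ))
    (hLtPsd : Lt.PosSemidef)
    (σ2 : ℝ) (hσ2 : 0 < σ2) :
    (∀ᶠ ε in nhdsWithin (0 : ℝ) (Ioi 0), IsUnit (ε • (L + σ2 • 1) + V * Vᵀ)) ∧
    (∃ c : ℝ, 0 ≤ c ∧ ∀ᶠ ε in nhdsWithin (0 : ℝ) (Ioi 0),
      ‖(ε • L + V * Vᵀ) * (ε • (L + σ2 • 1) + V * Vᵀ)⁻¹ -
        (Q * Qᵀ + Lt * (Lt + σ2 • 1)⁻¹)‖ ≤ c * ε) ∧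
    Tendsto (fun ε : ℝ =>
        (L + ε⁻¹ • (V * Vᵀ)) * (L + σ2 • 1 + ε⁻¹ • (V * Vᵀ))⁻¹)
      (nhdsWithin (0 : ℝ) (Ioi 0))
      (nhds (Q * Qᵀ + Lt * (Lt + σ2 • 1)⁻¹)) := by
  classical
  -- projector P
  set P : Matrix (Fin n) (Fin n) ℝ := Q * Qᵀ with hP
  have hPP : P * P = P := by
    rw [hP, Matrix.mul_assoc, ← Matrix.mul_assoc Qᵀ Q Qᵀ, hQorth, Matrix.one_mul]
  have hPsymm : Pᵀ = P := by rw [hP, transpose_mul, transpose_transpose]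
  have hPQ : P * Q = Q := by rw [hP, Matrix.mul_assoc, hQorth, Matrix.mul_one]
  have hPV : P * V = V := by
    ext i j
    have hcol : (fun i => V i j) ∈ LinearMap.range Q.mulVecLin := by
      rw [hQspan]
      refine ⟨Pi.single j 1, ?_⟩
      ext i
      simp [Matrix.mulVecLin_apply, Matrix.mulVec_single]
    obtain ⟨y, hy⟩ := hcol
    have hfix : P.mulVec (fun i => V i j) = fun i => V i j := by
      rw [← hy]
      simp only [Matrix.mulVecLin_apply]
      rw [Matrix.mulVec_mulVec, hPQ]
    have := congrFun hfix i
    simpa [Matrix.mul_apply, Matrix.mulVec, dotProduct] using this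
  have hVtP : Vᵀ * P = Vᵀ := by
    have := congrArg Matrix.transpose hPV
    rwa [Matrix.transpose_mul, hPsymm] at this
  -- Q = V * Y
  obtain ⟨Y, hVY⟩ : ∃ Y : Matrix (Fin p) (Fin p) ℝ, V * Y = Q := by
    have hcol : ∀ j, ∃ y, V.mulVec y = fun i => Q i j := by
      intro j
      have : (fun i => Q i j) ∈ LinearMap.range V.mulVecLin := by
        rw [← hQspan]
        refine ⟨Pi.single j 1, ?_⟩
        ext i
        simp [Matrix.mulVecLin_apply, Matrix.mulVec_single]
      obtain ⟨y, hy⟩ := this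
      exact ⟨y, hy⟩
    choose y hy using hcol
    refine ⟨Matrix.of (fun k j => y j k), ?_⟩
    ext i j
    have := congrFun (hy j) i
    simpa [Matrix.mul_apply, Matrix.mulVec, dotProduct] using this
  -- VᵀV invertible
  have hkerV : LinearMap.ker V.mulVecLin = ⊥ := by
    have h := V.mulVecLin.finrank_range_add_finrank_ker
    rw [show Module.finrank ℝ (Fin p → ℝ) = p by simp] at h
    have hr : Module.finrank ℝ (LinearMap.range V.mulVecLin) = p := hV
    rw [hr] at h
    have : Module.finrank ℝ (LinearMap.ker V.mulVecLin) = 0 := by omega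
    exact Submodule.finrank_eq_zero.mp this
  have hVtVunit : IsUnit (Vᵀ * V) := by
    rw [← Matrix.mulVec_injective_iff_isUnit]
    have hker : LinearMap.ker (Vᵀ * V).mulVecLin = ⊥ :=
      (Matrix.ker_mulVecLin_transpose_mul_self V).trans hkerV
    have hinj := LinearMap.ker_eq_bot.mp hker
    rw [← Matrix.coe_mulVecLin]
    exact hinj
  have hVtVdet : IsUnit (Vᵀ * V).det := (Matrix.isUnit_iff_isUnit_det _).mp hVtVunit
  set G : Matrix (Fin p) (Fin p) ℝ := (Vᵀ * V)⁻¹ with hG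
  have hG1 : (Vᵀ * V) * G = 1 := Matrix.mul_nonsing_inv _ hVtVdet
  have hG2 : G * (Vᵀ * V) = 1 := Matrix.nonsing_inv_mul _ hVtVdet
  have hGsymm : Gᵀ = G := by
    rw [hG, Matrix.transpose_nonsing_inv, Matrix.transpose_mul, Matrix.transpose_transpose]
  -- Pi = V G Vᵀ equals P
  set Pi' : Matrix (Fin n) (Fin n) ℝ := V * G * Vᵀ with hPi
  have hPiV : Pi' * V = V := by
    rw [hPi, Matrix.mul_assoc (V * G) Vᵀ V, Matrix.mul_assoc V G (Vᵀ * V), hG2, Matrix.mul_one]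
  have hPPi : P * Pi' = Pi' := by
    rw [hPi, ← Matrix.mul_assoc, ← Matrix.mul_assoc, hPV]
  have hPiP : Pi' * P = P := by
    have hPiQ : Pi' * Q = Q := by rw [← hVY, ← Matrix.mul_assoc, hPiV]
    rw [hP, ← Matrix.mul_assoc, hPiQ]
  have hPisymm : Pi'ᵀ = Pi' := by
    rw [hPi, Matrix.transpose_mul, Matrix.transpose_mul, Matrix.transpose_transpose, hGsymm,
      Matrix.mul_assoc]
  have hPiEqP : Pi' = P := by
    have h1 : P * Pi' = P := by
      have := congrArg Matrix.transpose hPiP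
      rwa [Matrix.transpose_mul, hPsymm, hPisymm] at this
    rw [← hPPi, h1]
  -- W with (V Vᵀ) W = P
  set W : Matrix (Fin n) (Fin n) ℝ := V * (G * G) * Vᵀ with hW
  have hcancel : ∀ Z : Matrix (Fin p) (Fin n) ℝ, Vᵀ * (V * (G * Z)) = Z := by
    intro Z
    rw [← Matrix.mul_assoc, ← Matrix.mul_assoc, hG1, Matrix.one_mul]
  have hVVtW : (V * Vᵀ) * W = P := by
    rw [hW, ← hPiEqP, hPi]
    simp only [Matrix.mul_assoc]
    rw [hcancel (G * Vᵀ)]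
  have hVVtPc : (V * Vᵀ) * (1 - P) = 0 := by
    rw [Matrix.mul_sub, Matrix.mul_one, Matrix.mul_assoc, hVtP, sub_self]
  -- Lt and A facts
  have hLt' : Lt = (1 - P) * L * (1 - P) := by rw [hLt, hP]
  have h1PP : (1 - P) * P = 0 := by rw [Matrix.sub_mul, Matrix.one_mul, hPP, sub_self]
  have hP1P : P * (1 - P) = 0 := by rw [Matrix.mul_sub, Matrix.mul_one, hPP, sub_self]
  have h1P1P : (1 - P) * (1 - P) = 1 - P := by
    rw [Matrix.mul_sub, Matrix.mul_one, h1PP, sub_zero]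
  have hLtP : Lt * P = 0 := by
    rw [hLt', Matrix.mul_assoc, h1PP, Matrix.mul_zero]
  have hPLt : P * Lt = 0 := by
    rw [hLt', ← Matrix.mul_assoc, ← Matrix.mul_assoc, hP1P, Matrix.zero_mul, Matrix.zero_mul]
  set A : Matrix (Fin n) (Fin n) ℝ := Lt + σ2 • 1 with hA
  have hApos : A.PosDef := by
    have hs1 : (σ2 • (1 : Matrix (Fin n) (Fin n) ℝ)).PosDef := by
      have : σ2 • (1 : Matrix (Fin n) (Fin n) ℝ) = Matrix.diagonal (fun _ => σ2) := by
        ext i j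
        by_cases h : i = j <;>
          simp [Matrix.diagonal_apply, Matrix.one_apply, h]
      rw [this]
      exact Matrix.PosDef.diagonal (fun _ => hσ2)
    exact Matrix.PosDef.posSemidef_add hLtPsd hs1
  have hAdet : IsUnit A.det := hApos.det_pos.ne'.isUnit
  set R : Matrix (Fin n) (Fin n) ℝ := A⁻¹ with hR
  have hAR : A * R = 1 := Matrix.mul_nonsing_inv _ hAdet
  have hRA : R * A = 1 := Matrix.nonsing_inv_mul _ hAdet
  have hPA : P * A = σ2 • P := by
    rw [hA, Matrix.mul_add, hPLt, Matrix.mul_smul, Matrix.mul_one, zero_add]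
  have hAP : A * P = σ2 • P := by
    rw [hA, Matrix.add_mul, hLtP, Matrix.smul_mul, Matrix.one_mul, zero_add]
  have hPR : P * R = σ2⁻¹ • P := by
    have h1 : σ2 • (P * R) = P := by
      calc σ2 • (P * R) = (σ2 • P) * R := (Matrix.smul_mul _ _ _).symm
        _ = (P * A) * R := by rw [hPA]
        _ = P := by rw [Matrix.mul_assoc, hAR, Matrix.mul_one]
    calc P * R = σ2⁻¹ • (σ2 • (P * R)) := by
          rw [smul_smul, inv_mul_cancel₀ hσ2.ne', one_smul]
      _ = σ2⁻¹ • P := by rw [h1]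
  have hRP : R * P = σ2⁻¹ • P := by
    have h1 : σ2 • (R * P) = P := by
      calc σ2 • (R * P) = R * (σ2 • P) := by rw [Matrix.mul_smul]
        _ = R * (A * P) := by rw [hAP]
        _ = P := by rw [← Matrix.mul_assoc, hRA, Matrix.one_mul]
    calc R * P = σ2⁻¹ • (σ2 • (R * P)) := by
          rw [smul_smul, inv_mul_cancel₀ hσ2.ne', one_smul]
      _ = σ2⁻¹ • P := by rw [h1]
  set X : Matrix (Fin n) (Fin n) ℝ := R * (1 - P) with hX
  have hXleft : (1 - P) * X = X := by
    rw [hX, ← Matrix.mul_assoc, Matrix.sub_mul, Matrix.one_mul, hPR, Matrix.sub_mul,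
      Matrix.smul_mul, hP1P, smul_zero, sub_zero]
  have hVVtX : (V * Vᵀ) * X = 0 := by
    rw [← hXleft, ← Matrix.mul_assoc, hVVtPc, Matrix.zero_mul]
  have hAX : A * X = 1 - P := by
    rw [hX, ← Matrix.mul_assoc, hAR, Matrix.one_mul]
  have hLtX : Lt * X = (1 - P) * (L * X) := by
    conv_lhs => rw [← hXleft]
    rw [hLt', Matrix.mul_assoc ((1 - P) * L) (1 - P) ((1 - P) * X), ← Matrix.mul_assoc (1 - P)
      (1 - P) X, h1P1P, hXleft, Matrix.mul_assoc]
  have hσX : σ2 • X = (1 - P) - (1 - P) * (L * X) := by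
    have := hAX
    rw [hA, Matrix.add_mul, hLtX, Matrix.smul_mul, Matrix.one_mul] at this
    have h2 : σ2 • X = ((1 - P) * (L * X) + σ2 • X) - (1 - P) * (L * X) := by abel
    rw [h2, this]
  have hLX : (L + σ2 • (1 : Matrix (Fin n) (Fin n) ℝ)) * X = (1 - P) + P * (L * X) := by
    rw [Matrix.add_mul, Matrix.smul_mul, Matrix.one_mul, hσX]
    have hPLX : P * (L * X) = L * X - (1 - P) * (L * X) := by
      rw [Matrix.sub_mul, Matrix.one_mul]; abel
    rw [hPLX]; abel
  set F : Matrix (Fin n) (Fin n) ℝ := W - W * (L * X) with hF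
  set E : Matrix (Fin n) (Fin n) ℝ := (L + σ2 • 1) * F with hE
  have hVVtF : (V * Vᵀ) * F = P - P * (L * X) := by
    rw [hF, Matrix.mul_sub, hVVtW, ← Matrix.mul_assoc (V * Vᵀ) W (L * X), hVVtW]
  -- key right-inverse identity
  have hBC : ∀ ε : ℝ, ε ≠ 0 →
      (ε • (L + σ2 • 1) + V * Vᵀ) * (ε⁻¹ • X + F) = 1 + ε • E := by
    intro ε hε
    have expand : (ε • (L + σ2 • 1) + V * Vᵀ) * (ε⁻¹ • X + F)
        = (ε * ε⁻¹) • ((L + σ2 • 1) * X) + ε • ((L + σ2 • 1) * F)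
          + (ε⁻¹ • ((V * Vᵀ) * X) + (V * Vᵀ) * F) := by
      rw [Matrix.add_mul, Matrix.mul_add, Matrix.mul_add, Matrix.smul_mul, Matrix.smul_mul,
        Matrix.mul_smul, Matrix.mul_smul, smul_smul]
    rw [expand, mul_inv_cancel₀ hε, one_smul, hLX, hVVtX, hVVtF, smul_zero, ← hE]
    abel
  -- M∞ rewriting
  have hM : P + Lt * R = 1 - σ2 • X := by
    have hLtR : Lt * R = 1 - σ2 • R := by
      have hLtA : Lt = A - σ2 • 1 := by rw [hA]; abel
      rw [hLtA, Matrix.sub_mul, hAR, Matrix.smul_mul, Matrix.one_mul]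
    have hσX2 : σ2 • X = σ2 • R - P := by
      rw [hX, Matrix.mul_sub, Matrix.mul_one, smul_sub, hRP, smul_smul,
        mul_inv_cancel₀ hσ2.ne', one_smul]
    rw [hLtR, hσX2]; abel
  rw [hM]
  clear_value P G Pi' W A R X F E
  clear hP hG hPi hW hA hR hX hF hE hLt hLt'
  -- continuity setup
  set d : ℝ → ℝ := fun ε => Matrix.det (1 + ε • E) with hd
  have hdcont : Continuous d :=
    Continuous.matrix_det (continuous_const.add (continuous_id.smul continuous_const))
  have hd0 : d 0 = 1 := by simp [hd]
  have hdne : ∀ᶠ ε in nhds (0:ℝ), d ε ≠ 0 :=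
    hdcont.continuousAt.eventually_ne (by rw [hd0]; exact one_ne_zero)
  set g : ℝ → Matrix (Fin n) (Fin n) ℝ :=
    fun ε => (X * E - F) * ((d ε)⁻¹ • (1 + ε • E).adjugate) with hg
  have hgcont : ContinuousAt g 0 := by
    apply ContinuousAt.mul continuousAt_const
    exact (hdcont.continuousAt.inv₀ (by rw [hd0]; exact one_ne_zero)).smul
      (Continuous.matrix_adjugate
        (continuous_const.add (continuous_id.smul continuous_const))).continuousAt
  have hgb : ∀ᶠ ε in nhds (0:ℝ), ‖g ε‖ ≤ ‖g 0‖ + 1 := by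
    have ht : Tendsto (fun ε => ‖g ε‖) (nhds 0) (nhds ‖g 0‖) := hgcont.norm
    exact ht.eventually_le_const (lt_add_one _)
  -- master eventual statement
  have Hmaster : ∀ᶠ ε in nhdsWithin (0:ℝ) (Ioi 0),
      IsUnit (ε • (L + σ2 • 1) + V * Vᵀ) ∧
      ‖(ε • L + V * Vᵀ) * (ε • (L + σ2 • 1) + V * Vᵀ)⁻¹ - (1 - σ2 • X)‖
        ≤ σ2 * (‖g 0‖ + 1) * ε ∧
      (L + ε⁻¹ • (V * Vᵀ)) * (L + σ2 • 1 + ε⁻¹ • (V * Vᵀ))⁻¹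
        = (ε • L + V * Vᵀ) * (ε • (L + σ2 • 1) + V * Vᵀ)⁻¹ := by
    filter_upwards [(hdne.and hgb).filter_mono nhdsWithin_le_nhds, self_mem_nhdsWithin]
      with ε hεd hεI
    obtain ⟨hdε, hgε⟩ := hεd
    have hε : (0:ℝ) < ε := hεI
    have hεne : ε ≠ 0 := hε.ne'
    have hNdet : IsUnit (1 + ε • E).det := isUnit_iff_ne_zero.mpr hdε
    have hNinv : (1 + ε • E) * (1 + ε • E)⁻¹ = 1 := Matrix.mul_nonsing_inv _ hNdet
    have hinveq : (1 + ε • E)⁻¹ = (d ε)⁻¹ • (1 + ε • E).adjugate := by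
      rw [Matrix.inv_def, Ring.inverse_eq_inv]
    have hright : (ε • (L + σ2 • 1) + V * Vᵀ) * ((ε⁻¹ • X + F) * (1 + ε • E)⁻¹) = 1 := by
      rw [← Matrix.mul_assoc, hBC ε hεne, hNinv]
    have hBunit : IsUnit (ε • (L + σ2 • 1) + V * Vᵀ) := ⟨⟨_, _, hright, mul_eq_one_comm.mp hright⟩, rfl⟩
    have hBdet : IsUnit (ε • (L + σ2 • 1) + V * Vᵀ).det :=
      (Matrix.isUnit_iff_isUnit_det _).mp hBunit
    have hBinv : (ε • (L + σ2 • 1) + V * Vᵀ)⁻¹ = (ε⁻¹ • X + F) * (1 + ε • E)⁻¹ :=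
      Matrix.inv_eq_right_inv hright
    have hεBinv : ε • (ε • (L + σ2 • 1) + V * Vᵀ)⁻¹ = (X + ε • F) * (1 + ε • E)⁻¹ := by
      rw [hBinv, ← Matrix.smul_mul, smul_add, smul_smul, mul_inv_cancel₀ hεne, one_smul]
    have hXX : X - ε • (ε • (L + σ2 • 1) + V * Vᵀ)⁻¹ = ε • g ε := by
      have h1 : X * (1 + ε • E) = X + ε • (X * E) := by
        rw [Matrix.mul_add, Matrix.mul_one, Matrix.mul_smul]
      calc X - ε • (ε • (L + σ2 • 1) + V * Vᵀ)⁻¹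
          = X * ((1 + ε • E) * (1 + ε • E)⁻¹) - (X + ε • F) * (1 + ε • E)⁻¹ := by
            rw [hNinv, Matrix.mul_one, hεBinv]
        _ = (X * (1 + ε • E) - (X + ε • F)) * (1 + ε • E)⁻¹ := by
            rw [← Matrix.mul_assoc, Matrix.sub_mul]
        _ = (ε • (X * E - F)) * (1 + ε • E)⁻¹ := by
            rw [h1, smul_sub]
            congr 1
            abel
        _ = ε • g ε := by
            rw [Matrix.smul_mul, hinveq]
    have hS : (ε • L + V * Vᵀ) * (ε • (L + σ2 • 1) + V * Vᵀ)⁻¹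
        = 1 - (ε * σ2) • (ε • (L + σ2 • 1) + V * Vᵀ)⁻¹ := by
      have hsplit : ε • L + V * Vᵀ = (ε • (L + σ2 • 1) + V * Vᵀ) - (ε * σ2) • 1 := by
        rw [smul_add, smul_smul]
        abel
      rw [hsplit, Matrix.sub_mul, Matrix.mul_nonsing_inv _ hBdet, Matrix.smul_mul,
        Matrix.one_mul]
    have hdiffeq : (ε • L + V * Vᵀ) * (ε • (L + σ2 • 1) + V * Vᵀ)⁻¹ - (1 - σ2 • X)
        = σ2 • (ε • g ε) := by
      rw [hS, ← hXX, smul_sub, smul_smul, mul_comm ε σ2]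
      abel
    refine ⟨hBunit, ?_, ?_⟩
    · rw [hdiffeq, norm_smul, norm_smul, Real.norm_eq_abs, Real.norm_eq_abs,
        abs_of_pos hσ2, abs_of_pos hε]
      calc σ2 * (ε * ‖g ε‖) ≤ σ2 * (ε * (‖g 0‖ + 1)) := by
            apply mul_le_mul_of_nonneg_left _ hσ2.le
            exact mul_le_mul_of_nonneg_left hgε hε.le
        _ = σ2 * (‖g 0‖ + 1) * ε := by ring
    · have hB2 : L + σ2 • 1 + ε⁻¹ • (V * Vᵀ) = ε⁻¹ • (ε • (L + σ2 • 1) + V * Vᵀ) := by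
        rw [smul_add, smul_smul, inv_mul_cancel₀ hεne, one_smul]
      have hsmulinv : (ε⁻¹ • (ε • (L + σ2 • 1) + V * Vᵀ))⁻¹
          = ε • (ε • (L + σ2 • 1) + V * Vᵀ)⁻¹ := by
        apply Matrix.inv_eq_right_inv
        rw [Matrix.smul_mul, Matrix.mul_smul, smul_smul, inv_mul_cancel₀ hεne, one_smul,
          Matrix.mul_nonsing_inv _ hBdet]
      have hnum : L + ε⁻¹ • (V * Vᵀ) = ε⁻¹ • (ε • L + V * Vᵀ) := by
        rw [smul_add, smul_smul, inv_mul_cancel₀ hεne, one_smul]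
      rw [hB2, hsmulinv, hnum, Matrix.smul_mul, Matrix.mul_smul, smul_smul,
        inv_mul_cancel₀ hεne, one_smul]
  refine ⟨?_, ⟨σ2 * (‖g 0‖ + 1), by positivity, ?_⟩, ?_⟩
  · filter_upwards [Hmaster] with ε h using h.1
  · filter_upwards [Hmaster] with ε h using h.2.1
  · refine tendsto_iff_norm_sub_tendsto_zero.mpr ?_
    have hcε : Tendsto (fun ε : ℝ => σ2 * (‖g 0‖ + 1) * ε) (nhdsWithin 0 (Ioi 0)) (nhds 0) := by
      have h1 : Tendsto (fun ε : ℝ => σ2 * (‖g 0‖ + 1) * ε) (nhds 0) (nhds 0) := by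
        have h2 : Tendsto (fun ε : ℝ => ε) (nhds (0:ℝ)) (nhds 0) := tendsto_id
        simpa using h2.const_mul (σ2 * (‖g 0‖ + 1))
      exact h1.mono_left nhdsWithin_le_nhds
    apply squeeze_zero' ?_ ?_ hcε
    · filter_upwards with ε using norm_nonneg _
    · filter_upwards [Hmaster] with ε h
      rw [h.2.2]
      exact h.2.1
end

section
/- Let V be a real n×p matrix of full column rank with 1 ≤ p < n, let L be a symmetric real n×n matrix that is conditionally positive semidefinite with respect to V, and let σ² > 0. Then the (n+p)×(n+p) saddle-point matrix S = [[L + σ²I, V], [Vᵀ, 0]] is invertible, and for every l ∈ ℝⁿ, v ∈ ℝᵖ and y ∈ ℝⁿ, the quantity (lᵀ + ε⁻¹ vᵀVᵀ)(L + σ²I + ε⁻¹VVᵀ)⁻¹ y converges as ε → 0⁺ to (lᵀ, vᵀ) S⁻¹ (y; 0), with error of order O(ε); here (y; 0) ∈ ℝ^{n+p} denotes y padded with p zeros. -/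
open Matrix Filter Set

private lemma mulVec_dot_aux {m k : Type*} [Fintype m] [Fintype k]
    (M : Matrix m k ℝ) (w : k → ℝ) (z : m → ℝ) :
    (M *ᵥ w) ⬝ᵥ z = w ⬝ᵥ (Mᵀ *ᵥ z) := by
  rw [Matrix.dotProduct_mulVec, Matrix.vecMul_transpose]

/-- **Flat limit of the semi-parametric predictive mean.**
Let `V` be `n × p` of full column rank (`1 ≤ p < n`), `L` symmetric and
conditionally positive semidefinite with respect to `V`, and `σ² > 0`. Then the
saddle-point matrix `S = [[L + σ²I, V], [Vᵀ, 0]]` is invertible and for all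
`l ∈ ℝⁿ`, `v ∈ ℝᵖ`, `y ∈ ℝⁿ`, the quantity
`(lᵀ + ε⁻¹ vᵀVᵀ)(L + σ²I + ε⁻¹VVᵀ)⁻¹ y` converges, with `O(ε)` error, to
`(lᵀ, vᵀ) S⁻¹ (y; 0)` as `ε → 0⁺`. -/
theorem semiparametric_predictive_mean_limit
    (n p : ℕ) (hp : 1 ≤ p) (hpn : p < n)
    (V : Matrix (Fin n) (Fin p) ℝ) (hV : V.rank = p)
    (Q : Matrix (Fin n) (Fin p) ℝ) (hQorth : Qᵀ * Q = 1)
    (hQspan : LinearMap.range Q.mulVecLin = LinearMap.range V.mulVecLin)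
    (L : Matrix (Fin n) (Fin n) ℝ) (hL : L.IsSymm)
    (hLcpsd : (((1 : Matrix (Fin n) (Fin n) ℝ) - Q * Qᵀ) * L *
        ((1 : Matrix (Fin n) (Fin n) ℝ) - Q * Qᵀ)).PosSemidef)
    (σ2 : ℝ) (hσ2 : 0 < σ2) :
    IsUnit (fromBlocks (L + σ2 • 1) V Vᵀ (0 : Matrix (Fin p) (Fin p) ℝ)) ∧
    ∀ (l : Fin n → ℝ) (v : Fin p → ℝ) (y : Fin n → ℝ),
      ∃ c : ℝ, 0 ≤ c ∧ ∀ᶠ ε in nhdsWithin (0 : ℝ) (Ioi 0),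
        |(l + ε⁻¹ • (V *ᵥ v)) ⬝ᵥ ((L + σ2 • 1 + ε⁻¹ • (V * Vᵀ))⁻¹ *ᵥ y) -
          Sum.elim l v ⬝ᵥ
            ((fromBlocks (L + σ2 • 1) V Vᵀ (0 : Matrix (Fin p) (Fin p) ℝ))⁻¹ *ᵥ
              Sum.elim y (0 : Fin p → ℝ))| ≤ c * ε := by
  classical
  set A : Matrix (Fin n) (Fin n) ℝ := L + σ2 • 1 with hA
  set S : Matrix (Fin n ⊕ Fin p) (Fin n ⊕ Fin p) ℝ :=
    fromBlocks A V Vᵀ (0 : Matrix (Fin p) (Fin p) ℝ) with hS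
  -- V has injective mulVec
  have hVinj : Function.Injective V.mulVecLin := by
    rw [← LinearMap.ker_eq_bot]
    have hfr := V.mulVecLin.finrank_range_add_finrank_ker
    rw [Module.finrank_fin_fun] at hfr
    have hrk : Module.finrank ℝ (LinearMap.range V.mulVecLin) = p := hV
    rw [hrk] at hfr
    have : Module.finrank ℝ (LinearMap.ker V.mulVecLin) = 0 := by omega
    exact Submodule.finrank_eq_zero.mp this
  -- kernel of S is trivial
  have hker : ∀ u : Fin n ⊕ Fin p → ℝ, S *ᵥ u = 0 → u = 0 := by
    intro u hu
    set x : Fin n → ℝ := u ∘ Sum.inl with hx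
    set μ : Fin p → ℝ := u ∘ Sum.inr with hμ
    have hu' : S *ᵥ Sum.elim x μ = 0 := by
      rwa [hx, hμ, Sum.elim_comp_inl_inr]
    rw [hS, fromBlocks_mulVec] at hu'
    have h1 : A *ᵥ x + V *ᵥ μ = 0 := funext fun i => congrFun hu' (Sum.inl i)
    have h2' : Vᵀ *ᵥ x + (0 : Matrix (Fin p) (Fin p) ℝ) *ᵥ μ = 0 :=
      funext fun i => congrFun hu' (Sum.inr i)
    have h2 : Vᵀ *ᵥ x = 0 := by rwa [zero_mulVec, add_zero] at h2'
    -- Qᵀ x = 0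
    have key : ∀ w : Fin p → ℝ, (Q *ᵥ w) ⬝ᵥ x = 0 := by
      intro w
      have hmem : Q *ᵥ w ∈ LinearMap.range V.mulVecLin := by
        rw [← hQspan]; exact ⟨w, rfl⟩
      obtain ⟨u', hu'⟩ := hmem
      have : Q *ᵥ w = V *ᵥ u' := by rw [← hu']; rfl
      rw [this, mulVec_dot_aux, h2, dotProduct_zero]
    have hQx : Qᵀ *ᵥ x = 0 := by
      have h3 := key (Qᵀ *ᵥ x)
      rw [mulVec_dot_aux] at h3
      exact dotProduct_self_eq_zero.mp h3
    -- x ⬝ L x ≥ 0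
    set P : Matrix (Fin n) (Fin n) ℝ := 1 - Q * Qᵀ with hP
    have hPx : P *ᵥ x = x := by
      rw [hP, sub_mulVec, one_mulVec, ← mulVec_mulVec, hQx, mulVec_zero, sub_zero]
    have hPsymm : Pᵀ = P := by
      rw [hP, transpose_sub, transpose_one, transpose_mul, transpose_transpose]
    have hLx : 0 ≤ x ⬝ᵥ (L *ᵥ x) := by
      have h0 := hLcpsd.dotProduct_mulVec_nonneg x
      rw [star_trivial] at h0
      calc (0 : ℝ) ≤ x ⬝ᵥ ((P * L * P) *ᵥ x) := h0
        _ = x ⬝ᵥ (P *ᵥ (L *ᵥ (P *ᵥ x))) := by rw [← mulVec_mulVec, ← mulVec_mulVec]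
        _ = x ⬝ᵥ (L *ᵥ x) := by
            rw [hPx, dotProduct_mulVec x P, ← mulVec_transpose, hPsymm, hPx]
    -- x = 0
    have h4 : x ⬝ᵥ (A *ᵥ x) = 0 := by
      have := congrArg (fun w => x ⬝ᵥ w) h1
      simp only [dotProduct_add, dotProduct_zero] at this
      have hxV : x ⬝ᵥ (V *ᵥ μ) = 0 := by
        rw [dotProduct_mulVec, ← mulVec_transpose, h2, zero_dotProduct]
      linarith [this, hxV]
    have hAx : x ⬝ᵥ (A *ᵥ x) = x ⬝ᵥ (L *ᵥ x) + σ2 * (x ⬝ᵥ x) := by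
      rw [hA, add_mulVec, dotProduct_add, smul_mulVec, one_mulVec,
        dotProduct_smul, smul_eq_mul]
    have hxx0 : x ⬝ᵥ x = 0 := by
      have hxxnn : 0 ≤ x ⬝ᵥ x := Finset.sum_nonneg fun i _ => mul_self_nonneg _
      nlinarith
    have hx0 : x = 0 := dotProduct_self_eq_zero.mp hxx0
    have hμ0 : μ = 0 := by
      have hVμ : V *ᵥ μ = 0 := by
        rw [hx0, mulVec_zero, zero_add] at h1; exact h1
      have : V.mulVecLin μ = V.mulVecLin 0 := by
        simpa [Matrix.mulVecLin_apply] using hVμ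
      exact hVinj this
    have : u = Sum.elim x μ := (Sum.elim_comp_inl_inr u).symm
    rw [this, hx0, hμ0]
    funext i; cases i <;> rfl
  have hdet : S.det ≠ 0 := by
    intro h
    obtain ⟨u, hu0, hu⟩ := Matrix.exists_mulVec_eq_zero_iff.mpr h
    exact hu0 (hker u hu)
  have hSunit : IsUnit S := (Matrix.isUnit_iff_isUnit_det S).mpr (isUnit_iff_ne_zero.mpr hdet)
  refine ⟨hSunit, ?_⟩
  intro l v y
  set E : Matrix (Fin n ⊕ Fin p) (Fin n ⊕ Fin p) ℝ :=
    fromBlocks 0 0 0 (1 : Matrix (Fin p) (Fin p) ℝ) with hE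
  set Sf : ℝ → Matrix (Fin n ⊕ Fin p) (Fin n ⊕ Fin p) ℝ := fun ε => S - ε • E with hSf
  have hSf0 : Sf 0 = S := by simp [hSf]
  have hScont : Continuous Sf := continuous_const.sub (continuous_id.smul continuous_const)
  have hdetcont : Continuous fun ε => (Sf ε).det := hScont.matrix_det
  have hdet0 : (Sf 0).det ≠ 0 := by rwa [hSf0]
  set w : Fin n ⊕ Fin p → ℝ := Sum.elim y (0 : Fin p → ℝ) with hw
  set φ : ℝ → ℝ := fun ε =>
    ((Sf ε).det)⁻¹ * (Sum.elim l v ⬝ᵥ ((S⁻¹ * E * (Sf ε).adjugate) *ᵥ w)) with hφ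
  have hφcont : ContinuousAt φ 0 := by
    apply ContinuousAt.mul
    · exact hdetcont.continuousAt.inv₀ hdet0
    · exact (continuous_const.dotProduct
        (((continuous_const.matrix_mul hScont.matrix_adjugate)).matrix_mulVec
          continuous_const)).continuousAt
  set c : ℝ := |φ 0| + 1 with hc
  refine ⟨c, by positivity, ?_⟩
  have ev1 : ∀ᶠ ε in nhds (0 : ℝ), (Sf ε).det ≠ 0 :=
    hdetcont.continuousAt.eventually_ne hdet0
  have ev2 : ∀ᶠ ε in nhds (0 : ℝ), |φ ε| < c := by
    have : ContinuousAt (fun ε => |φ ε|) 0 := hφcont.abs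
    exact this.eventually_lt_const (by rw [hc]; exact lt_add_one _)
  filter_upwards [eventually_nhdsWithin_of_eventually_nhds ev1,
    eventually_nhdsWithin_of_eventually_nhds ev2, self_mem_nhdsWithin]
    with ε hdε hφε hε
  have hεpos : (0 : ℝ) < ε := hε
  have hεne : ε ≠ 0 := ne_of_gt hεpos
  -- the shifted matrix as a block matrix
  have hSfε : Sf ε = fromBlocks A V Vᵀ ((-ε) • (1 : Matrix (Fin p) (Fin p) ℝ)) := by
    rw [hSf]
    show S - ε • E = _
    rw [hS, hE, fromBlocks_smul, sub_eq_add_neg, fromBlocks_neg, fromBlocks_add]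
    congr 1 <;> simp [neg_smul]
  have hSfεunit : IsUnit (Sf ε) :=
    (Matrix.isUnit_iff_isUnit_det _).mpr (isUnit_iff_ne_zero.mpr hdε)
  -- invertibility of the bottom-right block
  haveI hDinv : Invertible ((-ε) • (1 : Matrix (Fin p) (Fin p) ℝ)) := by
    apply Matrix.invertibleOfIsUnitDet
    rw [Matrix.det_smul, det_one, mul_one]
    exact isUnit_iff_ne_zero.mpr (pow_ne_zero _ (neg_ne_zero.mpr hεne))
  have hDinvEq : ⅟((-ε) • (1 : Matrix (Fin p) (Fin p) ℝ))
      = (-ε)⁻¹ • (1 : Matrix (Fin p) (Fin p) ℝ) := by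
    apply invOf_eq_right_inv
    rw [Matrix.smul_mul, Matrix.one_mul, smul_smul, mul_inv_cancel₀ (neg_ne_zero.mpr hεne),
      one_smul]
  -- the penalized matrix is invertible (Schur complement)
  set Aε : Matrix (Fin n) (Fin n) ℝ := L + σ2 • 1 + ε⁻¹ • (V * Vᵀ) with hAε
  have hschur : A - V * ⅟((-ε) • (1 : Matrix (Fin p) (Fin p) ℝ)) * Vᵀ = Aε := by
    rw [hDinvEq, Matrix.mul_smul, Matrix.mul_one, Matrix.smul_mul, inv_neg, neg_smul,
      sub_neg_eq_add, hAε, hA]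
  have hAεunit : IsUnit Aε := by
    rw [← hschur]
    rw [hSfε] at hSfεunit
    exact (Matrix.isUnit_fromBlocks_iff_of_invertible₂₂).mp hSfεunit
  have hAεdet : IsUnit Aε.det := (Matrix.isUnit_iff_isUnit_det _).mp hAεunit
  set x : Fin n → ℝ := Aε⁻¹ *ᵥ y with hxdef
  have hAx : Aε *ᵥ x = y := by
    rw [hxdef, mulVec_mulVec, Matrix.mul_nonsing_inv _ hAεdet, one_mulVec]
  set lam : Fin p → ℝ := ε⁻¹ • (Vᵀ *ᵥ x) with hlam
  have hc1 : A *ᵥ x + V *ᵥ lam = y := by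
    calc A *ᵥ x + V *ᵥ lam = A *ᵥ x + (ε⁻¹ • (V * Vᵀ)) *ᵥ x := by
          simp only [hlam, mulVec_smul, smul_mulVec, mulVec_mulVec]
      _ = Aε *ᵥ x := by rw [← add_mulVec, hAε, hA]
      _ = y := hAx
  have hc2 : Vᵀ *ᵥ x + ((-ε) • (1 : Matrix (Fin p) (Fin p) ℝ)) *ᵥ lam = 0 := by
    rw [hlam, smul_mulVec, one_mulVec, smul_smul, neg_mul,
      mul_inv_cancel₀ hεne]
    simp
  have hz : Sf ε *ᵥ Sum.elim x lam = w := by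
    rw [hSfε, fromBlocks_mulVec]
    simp only [Sum.elim_comp_inl, Sum.elim_comp_inr]
    rw [hw, hc1, hc2]
  have hSfdet : IsUnit (Sf ε).det := isUnit_iff_ne_zero.mpr hdε
  have hzeq : Sum.elim x lam = (Sf ε)⁻¹ *ᵥ w := by
    rw [← hz, mulVec_mulVec, Matrix.nonsing_inv_mul _ hSfdet, one_mulVec]
  -- rewrite the first dot product
  have hlhs : (l + ε⁻¹ • (V *ᵥ v)) ⬝ᵥ ((L + σ2 • 1 + ε⁻¹ • (V * Vᵀ))⁻¹ *ᵥ y)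
      = Sum.elim l v ⬝ᵥ ((Sf ε)⁻¹ *ᵥ w) := by
    rw [← hzeq, sumElim_dotProduct_sumElim]
    have : (L + σ2 • 1 + ε⁻¹ • (V * Vᵀ))⁻¹ *ᵥ y = x := rfl
    rw [this, add_dotProduct, smul_dotProduct, mulVec_dot_aux, hlam, dotProduct_smul]
  -- inverse difference identity
  have hid : (Sf ε)⁻¹ - S⁻¹ = ε • (S⁻¹ * E * (Sf ε)⁻¹) := by
    have h1 : S⁻¹ * S = 1 := Matrix.nonsing_inv_mul _ (isUnit_iff_ne_zero.mpr hdet)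
    have h2 : Sf ε * (Sf ε)⁻¹ = 1 := Matrix.mul_nonsing_inv _ hSfdet
    have key : (Sf ε)⁻¹ - S⁻¹ = S⁻¹ * (S - Sf ε) * (Sf ε)⁻¹ := by
      rw [Matrix.mul_sub, Matrix.sub_mul, h1, Matrix.one_mul, Matrix.mul_assoc, h2,
        Matrix.mul_one]
    rw [key]
    have : S - Sf ε = ε • E := by rw [hSf]; simp
    rw [this, Matrix.mul_smul, Matrix.smul_mul]
  -- express the inverse via the adjugate
  have hinvadj : (Sf ε)⁻¹ = ((Sf ε).det)⁻¹ • (Sf ε).adjugate := by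
    rw [Matrix.inv_def, Ring.inverse_eq_inv]
  -- final computation
  have hdiff : Sum.elim l v ⬝ᵥ ((Sf ε)⁻¹ *ᵥ w) - Sum.elim l v ⬝ᵥ (S⁻¹ *ᵥ w) = ε * φ ε := by
    rw [← dotProduct_sub, ← sub_mulVec, hid, smul_mulVec, dotProduct_smul, smul_eq_mul]
    congr 1
    rw [hφ]
    rw [hinvadj, Matrix.mul_smul, smul_mulVec, dotProduct_smul, smul_eq_mul]
  rw [hlhs]
  have : (fromBlocks (L + σ2 • 1) V Vᵀ (0 : Matrix (Fin p) (Fin p) ℝ))⁻¹ *ᵥ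
      Sum.elim y (0 : Fin p → ℝ) = S⁻¹ *ᵥ w := rfl
  rw [this, hdiff, abs_mul, abs_of_pos hεpos]
  rw [mul_comm c ε]
  exact mul_le_mul_of_nonneg_left (le_of_lt hφε) (le_of_lt hεpos)
end

section
/- Let V be a real n×p matrix of full column rank with 1 ≤ p < n, let L be a symmetric real n×n matrix that is conditionally positive semidefinite with respect to V, let σ² > 0, and let S = [[L + σ²I, V], [Vᵀ, 0]]. Then for every l ∈ ℝⁿ, v ∈ ℝᵖ and every scalar l₀ ∈ ℝ, the quantity l₀ + ε⁻¹ vᵀv − (lᵀ + ε⁻¹ vᵀVᵀ)(L + σ²I + ε⁻¹VVᵀ)⁻¹(l + ε⁻¹Vv) converges as ε → 0⁺ to l₀ − (lᵀ, vᵀ) S⁻¹ (l; v), with error of order O(ε). In particular the apparently divergent terms of order ε⁻² and ε⁻¹ cancel exactly in the limit. -/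
open Matrix Filter Set

/-- **Flat limit of the semi-parametric predictive variance.**
Let `V` be `n × p` of full column rank (`1 ≤ p < n`), `L` symmetric and
conditionally positive semidefinite with respect to `V`, `σ² > 0`, and
`S = [[L + σ²I, V], [Vᵀ, 0]]`. Then for every `l ∈ ℝⁿ`, `v ∈ ℝᵖ`, `l₀ ∈ ℝ`,
the quantity `l₀ + ε⁻¹ vᵀv − (lᵀ + ε⁻¹ vᵀVᵀ)(L + σ²I + ε⁻¹VVᵀ)⁻¹(l + ε⁻¹Vv)`
converges as `ε → 0⁺`, with `O(ε)` error, to `l₀ − (lᵀ, vᵀ) S⁻¹ (l; v)`: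
the apparently divergent terms cancel exactly in the limit. -/
theorem semiparametric_predictive_variance_limit
    (n p : ℕ) (hp : 1 ≤ p) (hpn : p < n)
    (V : Matrix (Fin n) (Fin p) ℝ) (hV : V.rank = p)
    (Q : Matrix (Fin n) (Fin p) ℝ) (hQorth : Qᵀ * Q = 1)
    (hQspan : LinearMap.range Q.mulVecLin = LinearMap.range V.mulVecLin)
    (L : Matrix (Fin n) (Fin n) ℝ) (hL : L.IsSymm)
    (hLcpsd : (((1 : Matrix (Fin n) (Fin n) ℝ) - Q * Qᵀ) * L *
        ((1 : Matrix (Fin n) (Fin n) ℝ) - Q * Qᵀ)).PosSemidef)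
    (σ2 : ℝ) (hσ2 : 0 < σ2) :
    ∀ (l : Fin n → ℝ) (v : Fin p → ℝ) (l₀ : ℝ),
      ∃ c : ℝ, 0 ≤ c ∧ ∀ᶠ ε in nhdsWithin (0 : ℝ) (Ioi 0),
        |(l₀ + ε⁻¹ * (v ⬝ᵥ v) -
            (l + ε⁻¹ • (V *ᵥ v)) ⬝ᵥ
              ((L + σ2 • 1 + ε⁻¹ • (V * Vᵀ))⁻¹ *ᵥ (l + ε⁻¹ • (V *ᵥ v)))) -
          (l₀ - Sum.elim l v ⬝ᵥ
            ((fromBlocks (L + σ2 • 1) V Vᵀ (0 : Matrix (Fin p) (Fin p) ℝ))⁻¹ *ᵥ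
              Sum.elim l v))| ≤ c * ε := by
  intro l v l₀
  set A : Matrix (Fin n) (Fin n) ℝ := L + σ2 • 1 with hAdef
  set S0 : Matrix (Fin n ⊕ Fin p) (Fin n ⊕ Fin p) ℝ :=
    fromBlocks A V Vᵀ (0 : Matrix (Fin p) (Fin p) ℝ) with hS0def
  set E : Matrix (Fin n ⊕ Fin p) (Fin n ⊕ Fin p) ℝ :=
    fromBlocks 0 0 0 (1 : Matrix (Fin p) (Fin p) ℝ) with hEdef
  set Sf : ℝ → Matrix (Fin n ⊕ Fin p) (Fin n ⊕ Fin p) ℝ :=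
    fun ε => S0 - ε • E with hSfdef
  have hSfblocks : ∀ ε : ℝ, Sf ε = fromBlocks A V Vᵀ (-(ε • 1)) := by
    intro ε
    ext i j
    rcases i with i | i <;> rcases j with j | j <;>
      simp [hSfdef, hS0def, hEdef]
  have hSf0 : Sf 0 = S0 := by simp [hSfdef]
  -- injectivity of V
  have hVinj : ∀ y : Fin p → ℝ, V *ᵥ y = 0 → y = 0 := by
    have hVr : Module.finrank ℝ (LinearMap.range V.mulVecLin) = p := hV
    have h1 := LinearMap.finrank_range_add_finrank_ker V.mulVecLin
    rw [hVr] at h1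
    have hfp : Module.finrank ℝ (Fin p → ℝ) = p := by simp
    rw [hfp] at h1
    have hk0 : Module.finrank ℝ (LinearMap.ker V.mulVecLin) = 0 := by omega
    have hker : LinearMap.ker V.mulVecLin = ⊥ := Submodule.finrank_eq_zero.mp hk0
    intro y hy
    have : y ∈ LinearMap.ker V.mulVecLin := by
      rw [LinearMap.mem_ker, Matrix.mulVecLin_apply, hy]
    rw [hker] at this
    simpa using this
  -- injectivity of the saddle matrix
  have hSker : ∀ z : Fin n ⊕ Fin p → ℝ, S0 *ᵥ z = 0 → z = 0 := by
    intro z hz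
    set x : Fin n → ℝ := z ∘ Sum.inl with hxdef
    set y : Fin p → ℝ := z ∘ Sum.inr with hydef
    have hzelim : z = Sum.elim x y := by
      funext i; cases i <;> rfl
    rw [hzelim, hS0def, Matrix.fromBlocks_mulVec] at hz
    have h1 : A *ᵥ x + V *ᵥ y = 0 := by
      ext i; exact congrFun hz (Sum.inl i)
    have h2 : Vᵀ *ᵥ x = 0 := by
      have h2' : Vᵀ *ᵥ x + (0 : Matrix (Fin p) (Fin p) ℝ) *ᵥ y = 0 := by
        ext i; exact congrFun hz (Sum.inr i)
      rwa [Matrix.zero_mulVec, add_zero] at h2'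
    -- Qᵀ x = 0
    have hQx : Qᵀ *ᵥ x = 0 := by
      ext i
      have hmem : Q *ᵥ Pi.single i 1 ∈ LinearMap.range V.mulVecLin := by
        rw [← hQspan]
        exact ⟨Pi.single i 1, rfl⟩
      obtain ⟨w, hw⟩ := hmem
      rw [Matrix.mulVecLin_apply] at hw
      have hcol : (Qᵀ *ᵥ x) i = x ⬝ᵥ (Q *ᵥ Pi.single i 1) := by
        rw [Matrix.mulVec_single]
        simp [Matrix.mulVec, dotProduct, Matrix.transpose_apply, mul_comm]
      rw [hcol, ← hw, Matrix.dotProduct_mulVec, ← Matrix.mulVec_transpose, h2]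
      simp
    -- (1 - QQᵀ) x = x
    have hPx : ((1 : Matrix (Fin n) (Fin n) ℝ) - Q * Qᵀ) *ᵥ x = x := by
      rw [Matrix.sub_mulVec, Matrix.one_mulVec, ← Matrix.mulVec_mulVec, hQx,
        Matrix.mulVec_zero, sub_zero]
    have hPsymm : ((1 : Matrix (Fin n) (Fin n) ℝ) - Q * Qᵀ)ᵀ = 1 - Q * Qᵀ := by
      rw [Matrix.transpose_sub, Matrix.transpose_one, Matrix.transpose_mul,
        Matrix.transpose_transpose]
    have hquad : 0 ≤ x ⬝ᵥ (L *ᵥ x) := by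
      have h := hLcpsd.dotProduct_mulVec_nonneg x
      rw [star_trivial] at h
      have e : (((1 : Matrix (Fin n) (Fin n) ℝ) - Q * Qᵀ) * L *
          ((1 : Matrix (Fin n) (Fin n) ℝ) - Q * Qᵀ)) *ᵥ x
          = ((1 : Matrix (Fin n) (Fin n) ℝ) - Q * Qᵀ) *ᵥ (L *ᵥ x) := by
        rw [← Matrix.mulVec_mulVec, hPx, ← Matrix.mulVec_mulVec]
      rw [e, Matrix.dotProduct_mulVec, ← Matrix.mulVec_transpose, hPsymm, hPx] at h
      exact h
    have hxVy : x ⬝ᵥ (V *ᵥ y) = 0 := by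
      rw [Matrix.dotProduct_mulVec, ← Matrix.mulVec_transpose, h2, zero_dotProduct]
    have hxAx : x ⬝ᵥ (A *ᵥ x) = 0 := by
      have := congrArg (fun u => x ⬝ᵥ u) h1
      simpa [dotProduct_add, hxVy] using this
    have hsplit : x ⬝ᵥ (A *ᵥ x) = x ⬝ᵥ (L *ᵥ x) + σ2 * (x ⬝ᵥ x) := by
      rw [hAdef, Matrix.add_mulVec, Matrix.smul_mulVec, Matrix.one_mulVec,
        dotProduct_add, dotProduct_smul, smul_eq_mul]
    have hxx0 : 0 ≤ x ⬝ᵥ x := Finset.sum_nonneg fun i _ => mul_self_nonneg _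
    have hx0 : x = 0 := by
      rw [← dotProduct_self_eq_zero (v := x)]
      nlinarith [hxAx, hsplit, hquad, hxx0]
    have hy0 : y = 0 := by
      apply hVinj
      have := h1
      rw [hx0, Matrix.mulVec_zero, zero_add] at this
      exact this
    rw [hzelim, hx0, hy0]
    ext i; cases i <;> simp
  have hS0inj : Function.Injective S0.mulVec := by
    have hker : LinearMap.ker S0.mulVecLin = ⊥ :=
      LinearMap.ker_eq_bot'.mpr fun z hz => hSker z (by rwa [Matrix.mulVecLin_apply] at hz)
    exact LinearMap.ker_eq_bot.mp hker
  have hS0unit : IsUnit S0 := Matrix.mulVec_injective_iff_isUnit.mp hS0inj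
  have hS0det : IsUnit S0.det := (Matrix.isUnit_iff_isUnit_det _).mp hS0unit
  have hS0detne : S0.det ≠ 0 := IsUnit.ne_zero hS0det
  -- continuity
  have hSfcont : Continuous Sf := by
    apply Continuous.sub continuous_const
    exact continuous_id.smul continuous_const
  have hdetcont : Continuous fun ε => (Sf ε).det := hSfcont.matrix_det
  have hinvcont : ContinuousAt (fun ε => (Sf ε)⁻¹) 0 := by
    have h1 : ContinuousAt Inv.inv (Sf 0) := by
      apply continuousAt_matrix_inv
      rw [Ring.inverse_eq_inv']
      exact continuousAt_inv₀ (by rwa [hSf0])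
    exact h1.comp hSfcont.continuousAt
  set h : ℝ → ℝ := fun ε =>
    Sum.elim l v ⬝ᵥ ((S0⁻¹ * E * (Sf ε)⁻¹) *ᵥ Sum.elim l v) with hhdef
  have hhcont : ContinuousAt h 0 := by
    have houter : Continuous fun M : Matrix (Fin n ⊕ Fin p) (Fin n ⊕ Fin p) ℝ =>
        Sum.elim l v ⬝ᵥ ((S0⁻¹ * E * M) *ᵥ Sum.elim l v) :=
      continuous_const.dotProduct
        ((continuous_const.matrix_mul continuous_id).matrix_mulVec continuous_const)
    exact houter.continuousAt.comp hinvcont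
  refine ⟨|h 0| + 1, by positivity, ?_⟩
  have hev1 : ∀ᶠ ε in nhds (0 : ℝ), (Sf ε).det ≠ 0 := by
    apply hdetcont.continuousAt.eventually_ne
    rwa [hSf0]
  have hev2 : ∀ᶠ ε in nhds (0 : ℝ), |h ε| ≤ |h 0| + 1 := by
    have hnb : ∀ᶠ y in nhds (h 0), |y| ≤ |h 0| + 1 := by
      filter_upwards [eventually_abs_sub_lt (h 0) one_pos] with y hy
      have := abs_sub_abs_le_abs_sub y (h 0)
      linarith
    exact hhcont.eventually hnb
  filter_upwards [eventually_nhdsWithin_of_eventually_nhds (hev1.and hev2),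
    self_mem_nhdsWithin] with ε hε hεpos
  obtain ⟨hdetε, hhε⟩ := hε
  have hε0 : (0 : ℝ) < ε := hεpos
  have hεne : ε ≠ 0 := ne_of_gt hε0
  have hSεdet : IsUnit (Sf ε).det := isUnit_iff_ne_zero.mpr hdetε
  -- invertibility of the regularized matrix
  have hDmul : (-(ε⁻¹ • (1 : Matrix (Fin p) (Fin p) ℝ))) * (-(ε • 1)) = 1 := by
    rw [neg_mul_neg, Matrix.smul_mul, Matrix.mul_smul, one_mul, smul_smul,
      inv_mul_cancel₀ hεne, one_smul]
  have hDmul' : (-(ε • (1 : Matrix (Fin p) (Fin p) ℝ))) * (-(ε⁻¹ • 1)) = 1 := by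
    rw [neg_mul_neg, Matrix.smul_mul, Matrix.mul_smul, one_mul, smul_smul,
      mul_inv_cancel₀ hεne, one_smul]
  letI : Invertible (-(ε • (1 : Matrix (Fin p) (Fin p) ℝ))) :=
    ⟨-(ε⁻¹ • 1), hDmul, hDmul'⟩
  have hinvOf : ⅟(-(ε • (1 : Matrix (Fin p) (Fin p) ℝ))) = -(ε⁻¹ • 1) := rfl
  set M : Matrix (Fin n) (Fin n) ℝ := A + ε⁻¹ • (V * Vᵀ) with hMdef
  have hdetSf : (Sf ε).det = (-(ε • (1 : Matrix (Fin p) (Fin p) ℝ))).det * M.det := by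
    rw [hSfblocks ε, Matrix.det_fromBlocks₂₂]
    congr 2
    rw [hinvOf, Matrix.mul_neg, Matrix.neg_mul, sub_neg_eq_add, Matrix.mul_smul,
      Matrix.mul_one, Matrix.smul_mul, hMdef]
  have hMdet : IsUnit M.det := by
    apply isUnit_iff_ne_zero.mpr
    intro h0
    exact hdetε (by rw [hdetSf, h0, mul_zero])
  set w : Fin n → ℝ := l + ε⁻¹ • (V *ᵥ v) with hwdef
  set x : Fin n → ℝ := M⁻¹ *ᵥ w with hxdef
  have hMx : M *ᵥ x = w := by
    rw [hxdef, Matrix.mulVec_mulVec, Matrix.mul_nonsing_inv _ hMdet, Matrix.one_mulVec]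
  set μ : Fin p → ℝ := ε⁻¹ • (Vᵀ *ᵥ x - v) with hμdef
  have hbot : Vᵀ *ᵥ x = v + ε • μ := by
    rw [hμdef, smul_smul, mul_inv_cancel₀ hεne, one_smul]
    abel
  have htop : A *ᵥ x + V *ᵥ μ = l := by
    have e : M *ᵥ x = A *ᵥ x + ε⁻¹ • (V *ᵥ (Vᵀ *ᵥ x)) := by
      rw [hMdef, Matrix.add_mulVec, Matrix.smul_mulVec, ← Matrix.mulVec_mulVec]
    have e2 : V *ᵥ μ = ε⁻¹ • (V *ᵥ (Vᵀ *ᵥ x)) - ε⁻¹ • (V *ᵥ v) := by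
      rw [hμdef, Matrix.mulVec_smul, Matrix.mulVec_sub, smul_sub]
    have e3 : A *ᵥ x = w - ε⁻¹ • (V *ᵥ (Vᵀ *ᵥ x)) := by
      rw [hMx] at e
      exact eq_sub_of_add_eq (by rw [← e])
    rw [e2, e3, hwdef]
    abel
  have hSev : Sf ε *ᵥ Sum.elim x μ = Sum.elim l v := by
    rw [hSfblocks ε, Matrix.fromBlocks_mulVec]
    simp only [Sum.elim_comp_inl, Sum.elim_comp_inr]
    rw [htop]
    have hb : Vᵀ *ᵥ x + -(ε • 1) *ᵥ μ = v := by
      rw [Matrix.neg_mulVec, Matrix.smul_mulVec, Matrix.one_mulVec, hbot]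
      abel
    rw [hb]
  have hxμ : Sum.elim x μ = (Sf ε)⁻¹ *ᵥ Sum.elim l v := by
    rw [← hSev, Matrix.mulVec_mulVec, Matrix.nonsing_inv_mul _ hSεdet, Matrix.one_mulVec]
  -- the quadratic form identity
  have hVvx : (V *ᵥ v) ⬝ᵥ x = v ⬝ᵥ (Vᵀ *ᵥ x) := by
    rw [dotProduct_comm, Matrix.dotProduct_mulVec, ← Matrix.mulVec_transpose,
      dotProduct_comm]
  have hdot : w ⬝ᵥ x = l ⬝ᵥ x + ε⁻¹ * (v ⬝ᵥ v) + v ⬝ᵥ μ := by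
    rw [hwdef, add_dotProduct, smul_dotProduct, hVvx, hbot,
      dotProduct_add, dotProduct_smul, smul_eq_mul, smul_eq_mul,
      mul_add, ← mul_assoc, inv_mul_cancel₀ hεne, one_mul]
    ring
  have hfirst : l₀ + ε⁻¹ * (v ⬝ᵥ v) - w ⬝ᵥ x
      = l₀ - Sum.elim l v ⬝ᵥ ((Sf ε)⁻¹ *ᵥ Sum.elim l v) := by
    rw [hdot, ← hxμ, sumElim_dotProduct_sumElim]
    ring
  -- the resolvent identity
  have hresolvent : S0⁻¹ - (Sf ε)⁻¹ = (-ε) • (S0⁻¹ * E * (Sf ε)⁻¹) := by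
    have hdiff : Sf ε - S0 = (-ε) • E := by
      show S0 - ε • E - S0 = (-ε) • E
      rw [sub_sub_cancel_left, neg_smul]
    have h1 : S0⁻¹ * (Sf ε - S0) * (Sf ε)⁻¹ = S0⁻¹ - (Sf ε)⁻¹ := by
      rw [Matrix.mul_sub, Matrix.sub_mul, mul_assoc, Matrix.mul_nonsing_inv _ hSεdet,
        mul_one, Matrix.nonsing_inv_mul _ hS0det, one_mul]
    rw [← h1, hdiff, Matrix.mul_smul, Matrix.smul_mul]
  have hkey : Sum.elim l v ⬝ᵥ (S0⁻¹ *ᵥ Sum.elim l v)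
      - Sum.elim l v ⬝ᵥ ((Sf ε)⁻¹ *ᵥ Sum.elim l v) = -(ε * h ε) := by
    have : Sum.elim l v ⬝ᵥ ((S0⁻¹ - (Sf ε)⁻¹) *ᵥ Sum.elim l v)
        = -(ε * h ε) := by
      rw [hresolvent, Matrix.smul_mulVec, dotProduct_smul, smul_eq_mul,
        hhdef]
      ring
    rw [← this, Matrix.sub_mulVec, dotProduct_sub]
  -- conclude
  calc |(l₀ + ε⁻¹ * (v ⬝ᵥ v) - w ⬝ᵥ x) - (l₀ - Sum.elim l v ⬝ᵥ (S0⁻¹ *ᵥ Sum.elim l v))|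
      = |-(ε * h ε)| := by rw [hfirst, ← hkey]; ring_nf
    _ = ε * |h ε| := by rw [abs_neg, abs_mul, abs_of_pos hε0]
    _ ≤ ε * (|h 0| + 1) := mul_le_mul_of_nonneg_left hhε (le_of_lt hε0)
    _ = (|h 0| + 1) * ε := mul_comm _ _
end

section
/- Let K be a symmetric positive semidefinite real n×n matrix with n ≥ 2, let σ² > 0, let M = K(K + σ²I)⁻¹, and let c = Mₙₙ be the last diagonal entry of M. Write J = {1, …, n−1}, K_{JJ} for the leading (n−1)×(n−1) block of K, K_{Jn} ∈ ℝ^{n−1} for the last column of K restricted to J, and Kₙₙ for the last diagonal entry of K. Then c < 1, and the Schur-complement predictive variance v := Kₙₙ − K_{Jn}ᵀ (K_{JJ} + σ²I_{n−1})⁻¹ K_{Jn} satisfies v = σ² c / (1 − c). -/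
open Matrix

/-- **Predictive variance from the smoother matrix.**
For a symmetric positive semidefinite `K ∈ ℝ^{(n+1)×(n+1)}` (with `n ≥ 1`, so
size at least `2`) and `σ² > 0`, letting `M = K(K + σ²I)⁻¹` and `c = Mₙₙ` its
last diagonal entry, we have `c < 1` and the Schur-complement predictive
variance `v = Kₙₙ − K_{Jn}ᵀ (K_{JJ} + σ²I)⁻¹ K_{Jn}` equals `σ² c / (1 − c)`. -/
theorem predictive_variance_eq_of_smoother
    (n : ℕ) (hn : 1 ≤ n)
    (K : Matrix (Fin (n + 1)) (Fin (n + 1)) ℝ) (hK : K.PosSemidef)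
    (σ2 : ℝ) (hσ2 : 0 < σ2)
    (M : Matrix (Fin (n + 1)) (Fin (n + 1)) ℝ) (hM : M = K * (K + σ2 • 1)⁻¹)
    (c : ℝ) (hc : c = M (Fin.last n) (Fin.last n))
    (KJJ : Matrix (Fin n) (Fin n) ℝ)
    (hKJJ : KJJ = fun i j => K i.castSucc j.castSucc)
    (kJn : Fin n → ℝ) (hkJn : kJn = fun i => K i.castSucc (Fin.last n)) :
    c < 1 ∧
    K (Fin.last n) (Fin.last n) - kJn ⬝ᵥ ((KJJ + σ2 • 1)⁻¹ *ᵥ kJn)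
      = σ2 * c / (1 - c) := by
  haveI : NeZero n := ⟨Nat.one_le_iff_ne_zero.mp hn⟩
  set A : Matrix (Fin (n + 1)) (Fin (n + 1)) ℝ := K + σ2 • 1 with hAdef
  have hσ1 : ((σ2 • 1 : Matrix (Fin (n+1)) (Fin (n+1)) ℝ)).PosDef := by
    rw [Matrix.smul_one_eq_diagonal]
    exact Matrix.PosDef.diagonal (fun _ => hσ2)
  have hA : A.PosDef := Matrix.PosDef.posSemidef_add hK hσ1
  have hKJJ' : KJJ = K.submatrix Fin.castSucc Fin.castSucc := by
    rw [hKJJ]; rfl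
  set AJ : Matrix (Fin n) (Fin n) ℝ := KJJ + σ2 • 1 with hAJdef
  have hσ1' : ((σ2 • 1 : Matrix (Fin n) (Fin n) ℝ)).PosDef := by
    rw [Matrix.smul_one_eq_diagonal]
    exact Matrix.PosDef.diagonal (fun _ => hσ2)
  have hAJ : AJ.PosDef := by
    rw [hAJdef, hKJJ']
    exact Matrix.PosDef.posSemidef_add (hK.submatrix _) hσ1'
  have hAJinv : AJ * AJ⁻¹ = 1 :=
    Matrix.mul_nonsing_inv _ (isUnit_iff_ne_zero.mpr hAJ.det_pos.ne')
  -- the test vector y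
  set w : Fin n → ℝ := (KJJ + σ2 • 1)⁻¹ *ᵥ kJn with hw
  set y : Fin (n + 1) → ℝ := Fin.snoc (fun i => -w i) 1 with hy
  set s : ℝ := K (Fin.last n) (Fin.last n) + σ2 - kJn ⬝ᵥ w with hs
  have hylast : y (Fin.last n) = 1 := by simp [hy]
  have hycast : ∀ i : Fin n, y i.castSucc = -w i := by
    intro i; simp [hy]
  have hsum : ∀ i, (A *ᵥ y) i
      = (∑ j : Fin n, A i j.castSucc * (-w j)) + A i (Fin.last n) * 1 := by
    intro i
    rw [Matrix.mulVec, dotProduct, Fin.sum_univ_castSucc]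
    simp [hycast, hylast]
  -- key identity : A *ᵥ y = s • e_last
  have hAy : A *ᵥ y = Pi.single (Fin.last n) s := by
    funext i
    refine Fin.lastCases ?_ ?_ i
    · -- i = last
      rw [hsum]
      have hAle : ∀ j : Fin n, A (Fin.last n) j.castSucc = kJn j := by
        intro j
        have h1 : (1 : Matrix (Fin (n+1)) (Fin (n+1)) ℝ) (Fin.last n) j.castSucc = 0 :=
          Matrix.one_apply_ne (Fin.castSucc_lt_last j).ne'
        have hsym : K (Fin.last n) j.castSucc = K j.castSucc (Fin.last n) := by
          have := hK.isHermitian.apply (Fin.last n) j.castSucc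
          simpa using this.symm
        simp [hAdef, Matrix.add_apply, Matrix.smul_apply, h1, hsym, hkJn]
      have hAll : A (Fin.last n) (Fin.last n) = K (Fin.last n) (Fin.last n) + σ2 := by
        simp [hAdef, Matrix.add_apply, Matrix.smul_apply, Matrix.one_apply_eq]
      simp only [hAle, hAll, Pi.single_eq_same]
      rw [hs]
      have : ∑ j : Fin n, kJn j * (-w j) = -(kJn ⬝ᵥ w) := by
        rw [dotProduct, ← Finset.sum_neg_distrib]
        exact Finset.sum_congr rfl fun j _ => by ring
      rw [this]; ring
    · -- i = castSucc i'
      intro i'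
      rw [hsum]
      have hAc : ∀ j : Fin n, A i'.castSucc j.castSucc = AJ i' j := by
        intro j
        simp only [hAdef, hAJdef, Matrix.add_apply, Matrix.smul_apply, hKJJ]
        congr 1
        by_cases hij : i' = j
        · subst hij; simp [Matrix.one_apply_eq]
        · rw [Matrix.one_apply_ne (fun h => hij (Fin.castSucc_injective n h)),
            ]; simp [Matrix.one_apply_ne hij]
      have hAl : A i'.castSucc (Fin.last n) = kJn i' := by
        have h1 : (1 : Matrix (Fin (n+1)) (Fin (n+1)) ℝ) i'.castSucc (Fin.last n) = 0 :=
          Matrix.one_apply_ne (Fin.castSucc_lt_last i').ne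
        simp [hAdef, Matrix.add_apply, Matrix.smul_apply, h1, hkJn]
      have hAJw : ∑ j : Fin n, AJ i' j * w j = kJn i' := by
        have h2 : (AJ *ᵥ w) i' = kJn i' := by
          rw [hw, ← hAJdef, Matrix.mulVec_mulVec, hAJinv, Matrix.one_mulVec]
        simpa [Matrix.mulVec, dotProduct] using h2
      have h3 : ∑ j : Fin n, A i'.castSucc j.castSucc * (-w j)
          = -(∑ j : Fin n, AJ i' j * w j) := by
        rw [← Finset.sum_neg_distrib]
        exact Finset.sum_congr rfl fun j _ => by rw [hAc]; ring
      rw [h3, hAJw, hAl, Pi.single_eq_of_ne (Fin.castSucc_lt_last i').ne]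
      ring
  -- positivity of s
  have hy0 : y ≠ 0 := fun h => by
    have := congrFun h (Fin.last n); rw [hylast] at this; simp at this
  have hspos : 0 < s := by
    have := hA.dotProduct_mulVec_pos hy0
    simpa [hAy, dotProduct_single, hylast, star_trivial] using this
  -- A⁻¹ last last = 1 / s
  have hAinvmul : A⁻¹ * A = 1 :=
    Matrix.nonsing_inv_mul _ (isUnit_iff_ne_zero.mpr hA.det_pos.ne')
  have hyinv : y = s • (A⁻¹ *ᵥ (Pi.single (Fin.last n) 1 : Fin (n + 1) → ℝ)) := by
    have h1 : A⁻¹ *ᵥ (A *ᵥ y) = y := by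
      rw [Matrix.mulVec_mulVec, hAinvmul, Matrix.one_mulVec]
    have h2 : (Pi.single (Fin.last n) s : Fin (n+1) → ℝ)
        = s • (Pi.single (Fin.last n) 1 : Fin (n + 1) → ℝ) := by
      funext i
      by_cases h : i = Fin.last n
      · subst h; simp
      · simp [Pi.single_eq_of_ne h]
    rw [← h1, hAy, h2, Matrix.mulVec_smul]
  have hsne : s ≠ 0 := hspos.ne'
  have hAinvll : A⁻¹ (Fin.last n) (Fin.last n) = 1 / s := by
    have h1 : (A⁻¹ *ᵥ Pi.single (Fin.last n) 1) (Fin.last n)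
        = A⁻¹ (Fin.last n) (Fin.last n) := by
      simp [Matrix.mulVec, dotProduct_single]
    have h2 := congrFun hyinv (Fin.last n)
    rw [hylast, Pi.smul_apply, h1, smul_eq_mul] at h2
    rw [eq_div_iff hsne]
    linarith [h2]
  -- c = 1 - σ2 / s
  have hMeq : M = 1 - σ2 • A⁻¹ := by
    rw [hM]
    have hAinv' : A * A⁻¹ = 1 :=
      Matrix.mul_nonsing_inv _ (isUnit_iff_ne_zero.mpr hA.det_pos.ne')
    have hKA : K = A - σ2 • 1 := (add_sub_cancel_right K (σ2 • 1)).symm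
    rw [hKA, Matrix.sub_mul, hAinv', Matrix.smul_mul, Matrix.one_mul]
  have hceq : c = 1 - σ2 / s := by
    rw [hc, hMeq]
    simp only [Matrix.sub_apply, Matrix.smul_apply, Matrix.one_apply_eq, hAinvll,
      smul_eq_mul]
    try ring
  constructor
  · rw [hceq]
    have : 0 < σ2 / s := div_pos hσ2 hspos
    linarith
  · have hv : K (Fin.last n) (Fin.last n) - kJn ⬝ᵥ w = s - σ2 := by
      rw [hs]; ring
    rw [hv, hceq]
    field_simp [hσ2.ne']
    try ring
end

section
/- Let K be a symmetric positive semidefinite real n×n matrix with n ≥ 2, let σ² > 0, let M = K(K + σ²I)⁻¹, and let c = Mₙₙ. Write J = {1, …, n−1}. Then for every y ∈ ℝ^{n−1}, letting ỹ ∈ ℝⁿ be y extended by 0 in the last coordinate, the predictive mean satisfies K_{Jn}ᵀ (K_{JJ} + σ²I_{n−1})⁻¹ y = (M ỹ)ₙ / (1 − c), where (M ỹ)ₙ is the last coordinate of M ỹ (and c < 1 so the right-hand side is well defined). -/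
open Matrix

/-- **Predictive mean from the smoother matrix.**
For a symmetric positive semidefinite `K ∈ ℝ^{(n+1)×(n+1)}` (with `n ≥ 1`, so
size at least `2`) and `σ² > 0`, letting `M = K(K + σ²I)⁻¹` and `c = Mₙₙ`, we
have `c < 1` and, for every `y ∈ ℝⁿ`, writing `ỹ` for `y` extended by `0` in the
last coordinate, the predictive mean satisfies
`K_{Jn}ᵀ (K_{JJ} + σ²I)⁻¹ y = (M ỹ)ₙ / (1 − c)`. -/
theorem predictive_mean_eq_of_smoother
    (n : ℕ) (hn : 1 ≤ n)
    (K : Matrix (Fin (n + 1)) (Fin (n + 1)) ℝ) (hK : K.PosSemidef)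
    (σ2 : ℝ) (hσ2 : 0 < σ2)
    (M : Matrix (Fin (n + 1)) (Fin (n + 1)) ℝ) (hM : M = K * (K + σ2 • 1)⁻¹)
    (c : ℝ) (hc : c = M (Fin.last n) (Fin.last n))
    (KJJ : Matrix (Fin n) (Fin n) ℝ)
    (hKJJ : KJJ = fun i j => K i.castSucc j.castSucc)
    (kJn : Fin n → ℝ) (hkJn : kJn = fun i => K i.castSucc (Fin.last n)) :
    c < 1 ∧
    ∀ y : Fin n → ℝ,
      kJn ⬝ᵥ ((KJJ + σ2 • 1)⁻¹ *ᵥ y)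
        = (M *ᵥ Fin.snoc y 0) (Fin.last n) / (1 - c) := by
  classical
  set A := K + σ2 • (1 : Matrix (Fin (n+1)) (Fin (n+1)) ℝ) with hA_def
  set B := KJJ + σ2 • (1 : Matrix (Fin n) (Fin n) ℝ) with hB_def
  have hD : (σ2 • (1 : Matrix (Fin (n+1)) (Fin (n+1)) ℝ)).PosDef := by
    rw [smul_one_eq_diagonal]
    exact Matrix.posDef_diagonal_iff.mpr fun _ => hσ2
  have hDn : (σ2 • (1 : Matrix (Fin n) (Fin n) ℝ)).PosDef := by
    rw [smul_one_eq_diagonal]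
    exact Matrix.posDef_diagonal_iff.mpr fun _ => hσ2
  have hApd : A.PosDef := Matrix.PosDef.posSemidef_add hK hD
  have hKJJsd : KJJ.PosSemidef := by
    have : KJJ = K.submatrix Fin.castSucc Fin.castSucc := by rw [hKJJ]; rfl
    rw [this]; exact hK.submatrix _
  have hBpd : B.PosDef := Matrix.PosDef.posSemidef_add hKJJsd hDn
  have hAdet : IsUnit A.det := isUnit_iff_ne_zero.mpr hApd.det_pos.ne'
  have hBdet : IsUnit B.det := isUnit_iff_ne_zero.mpr hBpd.det_pos.ne'
  have hAinv : (A⁻¹).PosDef := hApd.inv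
  have hBinv : (B⁻¹).PosDef := hBpd.inv
  set α := A⁻¹ (Fin.last n) (Fin.last n) with hα_def
  have hαpos : 0 < α := by
    have h := hAinv.dotProduct_mulVec_pos (x := Pi.single (Fin.last n) 1)
      (by intro h; simpa using congrFun h (Fin.last n))
    simpa [mulVec_single, single_dotProduct, hα_def] using h
  have hM' : M = 1 - σ2 • A⁻¹ := by
    have hK' : K = A - σ2 • 1 := by rw [hA_def]; abel
    rw [hM, hK', sub_mul, Matrix.mul_nonsing_inv _ hAdet,
      Matrix.smul_mul, one_mul]
  have hcval : c = 1 - σ2 * α := by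
    rw [hc, hM']
    simp [Matrix.sub_apply, Matrix.one_apply, Matrix.smul_apply, hα_def, smul_eq_mul]
  have hc1 : c < 1 := by nlinarith
  refine ⟨hc1, fun y => ?_⟩
  -- the last column of A⁻¹
  set w : Fin (n+1) → ℝ := fun j => A⁻¹ j (Fin.last n) with hw_def
  have hw : A *ᵥ w = Pi.single (Fin.last n) 1 := by
    have hweq : w = A⁻¹ *ᵥ Pi.single (Fin.last n) 1 := by
      funext j; simp [hw_def, mulVec_single]
    rw [hweq, Matrix.mulVec_mulVec, Matrix.mul_nonsing_inv _ hAdet, Matrix.one_mulVec]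
  set wJ : Fin n → ℝ := fun i => w i.castSucc with hwJ_def
  have hBA : ∀ i i' : Fin n, B i i' = A i.castSucc i'.castSucc := by
    intro i i'
    simp [hB_def, hA_def, hKJJ, Matrix.add_apply, Pi.add_apply, Matrix.smul_apply, Matrix.one_apply,
      Fin.castSucc_inj, smul_eq_mul]
    exact (Matrix.add_apply _ _ _ _).trans (by simp [Matrix.one_apply])
  have hAlast : ∀ i : Fin n, A i.castSucc (Fin.last n) = kJn i := by
    intro i
    simp [hA_def, hkJn, Matrix.add_apply, Matrix.smul_apply, Matrix.one_apply,
      (Fin.castSucc_lt_last i).ne, smul_eq_mul]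
  have hBwJ : B *ᵥ wJ = (-α) • kJn := by
    funext i
    have h0 : (A *ᵥ w) i.castSucc = 0 := by
      rw [hw]; exact Pi.single_eq_of_ne (Fin.castSucc_lt_last i).ne 1
    have h1 : ∑ j, A i.castSucc j * w j = 0 := by
      simpa [Matrix.mulVec, dotProduct] using h0
    rw [Fin.sum_univ_castSucc] at h1
    have h2 : (B *ᵥ wJ) i = ∑ i' : Fin n, A i.castSucc i'.castSucc * w i'.castSucc := by
      simp only [Matrix.mulVec, dotProduct, hwJ_def]
      exact Finset.sum_congr rfl fun i' _ => by rw [hBA i i']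
    have h3 : w (Fin.last n) = α := rfl
    rw [hAlast i, h3] at h1
    simp only [Pi.smul_apply, smul_eq_mul, h2]
    linarith
  have hwJ : wJ = (-α) • (B⁻¹ *ᵥ kJn) := by
    have h := congrArg (fun v => B⁻¹ *ᵥ v) hBwJ
    simp only [Matrix.mulVec_mulVec, Matrix.nonsing_inv_mul _ hBdet, Matrix.one_mulVec,
      Matrix.mulVec_smul] at h
    exact h
  -- symmetry facts
  have hAsymm : ∀ i j, A⁻¹ i j = A⁻¹ j i := fun i j => by
    have := hAinv.isHermitian.apply j i
    simpa using this
  have hBTrans : (B⁻¹)ᵀ = B⁻¹ := by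
    have := hBinv.isHermitian.eq
    rwa [Matrix.conjTranspose_eq_transpose_of_trivial] at this
  -- LHS rewriting
  have hLHS : kJn ⬝ᵥ (B⁻¹ *ᵥ y) = (B⁻¹ *ᵥ kJn) ⬝ᵥ y := by
    rw [Matrix.dotProduct_mulVec, ← Matrix.mulVec_transpose, hBTrans]
  -- numerator
  have hnum : (M *ᵥ Fin.snoc y 0) (Fin.last n)
      = σ2 * α * ((B⁻¹ *ᵥ kJn) ⬝ᵥ y) := by
    have h4 : (A⁻¹ *ᵥ Fin.snoc y 0) (Fin.last n) = wJ ⬝ᵥ y := by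
      simp only [Matrix.mulVec, dotProduct]
      rw [Fin.sum_univ_castSucc]
      simp only [Fin.snoc_castSucc, Fin.snoc_last, mul_zero, add_zero]
      exact Finset.sum_congr rfl fun i _ => by
        rw [hAsymm (Fin.last n) i.castSucc]
    rw [hM']
    simp only [Matrix.sub_mulVec, Matrix.one_mulVec, Pi.sub_apply, Fin.snoc_last,
      Matrix.smul_mulVec, Pi.smul_apply, smul_eq_mul, h4, hwJ]
    simp only [smul_dotProduct, smul_eq_mul]
    ring
  rw [hLHS, hnum, hcval]
  have hne : σ2 * α ≠ 0 := by positivity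
  field_simp
  ring
end

section
/- Let μ be a finite nonnegative measure on ℝᵈ that is symmetric under ω ↦ −ω, let k ∈ ℕ, and suppose ∫ ‖ω‖^{2k} dμ(ω) < ∞. Define the real matrix W, indexed by multi-indices α, β ∈ ℕᵈ with |α| ≤ k and |β| ≤ k, by W_{α,β} = 0 if |α| + |β| is odd, and W_{α,β} = ((−1)^{p+|β|}/(α!β!)) ∫ ω^{α+β} dμ(ω) if |α| + |β| = 2p. Then W is symmetric positive semidefinite. -/
open Matrix MeasureTheory

namespace WronskianAux

noncomputable def u (d k : ℕ) (α : {α : Fin d → Fin (k + 1) // ∑ i, (α i : ℕ) ≤ k})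
    (ω : Fin d → ℝ) : ℝ :=
  ((-1 : ℝ) ^ ((∑ i, (α.1 i : ℕ)) / 2) / ((∏ i, Nat.factorial (α.1 i) : ℕ) : ℝ)) *
    ∏ i, ω i ^ (α.1 i : ℕ)

lemma monomial_cont (d : ℕ) (γ : Fin d → ℕ) :
    Continuous fun ω : Fin d → ℝ => ∏ i, ω i ^ γ i := by fun_prop

lemma neg_one_pow_parity (m n : ℕ) (h : m % 2 = n % 2) : ((-1 : ℝ)) ^ m = (-1) ^ n := by
  rcases Nat.even_or_odd m with hm | hm
  · have hn : Even n := by rw [Nat.even_iff] at *; omega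
    rw [hm.neg_one_pow, hn.neg_one_pow]
  · have hn : Odd n := by rw [Nat.odd_iff] at *; omega
    rw [hm.neg_one_pow, hn.neg_one_pow]

lemma sign_eq (m n : ℕ) (h : ¬ Odd (m + n)) :
    ((-1 : ℝ)) ^ ((m + n) / 2 + n) = (-1) ^ (m / 2) * (-1) ^ (n / 2) := by
  rw [← pow_add]
  rw [Nat.odd_iff] at h
  obtain ⟨a, ha⟩ | ⟨a, ha⟩ := Nat.even_or_odd m
  · obtain ⟨b, hb2⟩ : ∃ b, n = b + b := ⟨n / 2, by omega⟩
    subst ha hb2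
    have e1 : (a + a + (b + b)) / 2 = a + b := by omega
    have e2 : (a + a) / 2 = a := by omega
    have e3 : (b + b) / 2 = b := by omega
    rw [e1, e2, e3]
    apply neg_one_pow_parity
    omega
  · obtain ⟨b, hb2⟩ : ∃ b, n = 2 * b + 1 := ⟨n / 2, by omega⟩
    subst ha hb2
    have e1 : (2 * a + 1 + (2 * b + 1)) / 2 = a + b + 1 := by omega
    have e2 : (2 * a + 1) / 2 = a := by omega
    have e3 : (2 * b + 1) / 2 = b := by omega
    rw [e1, e2, e3]
    apply neg_one_pow_parity
    omega

lemma monomial_integrable {d : ℕ} (k : ℕ) (μ : Measure (Fin d → ℝ)) [IsFiniteMeasure μ]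
    (hmom : Integrable (fun ω : Fin d → ℝ => ‖ω‖ ^ (2 * k)) μ)
    (γ : Fin d → ℕ) (hγ : ∑ i, γ i ≤ 2 * k) :
    Integrable (fun ω : Fin d → ℝ => ∏ i, ω i ^ γ i) μ := by
  have hbound : Integrable (fun ω : Fin d → ℝ => 1 + ‖ω‖ ^ (2 * k)) μ :=
    (integrable_const 1).add hmom
  refine hbound.mono ((monomial_cont d γ).aestronglyMeasurable) ?_
  filter_upwards with ω
  have h1 : ‖∏ i, ω i ^ γ i‖ ≤ ‖ω‖ ^ (∑ i, γ i) := by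
    rw [Real.norm_eq_abs, Finset.abs_prod, ← Finset.prod_pow_eq_pow_sum]
    refine Finset.prod_le_prod (fun i _ => abs_nonneg _) (fun i _ => ?_)
    rw [abs_pow]
    exact pow_le_pow_left₀ (abs_nonneg _) (norm_le_pi_norm ω i) _
  have h2 : ‖ω‖ ^ (∑ i, γ i) ≤ 1 + ‖ω‖ ^ (2 * k) := by
    rcases le_or_gt ‖ω‖ 1 with h | h
    · have h3 : ‖ω‖ ^ (∑ i, γ i) ≤ 1 := pow_le_one₀ (norm_nonneg ω) h
      have h4 : (0 : ℝ) ≤ ‖ω‖ ^ (2 * k) := pow_nonneg (norm_nonneg ω) _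
      linarith
    · have h3 : ‖ω‖ ^ (∑ i, γ i) ≤ ‖ω‖ ^ (2 * k) := pow_le_pow_right₀ h.le hγ
      linarith
  have h5 : ‖1 + ‖ω‖ ^ (2 * k)‖ = 1 + ‖ω‖ ^ (2 * k) := by
    rw [Real.norm_eq_abs, abs_of_nonneg (by positivity)]
  rw [h5]
  exact h1.trans h2

lemma odd_integral_zero {d : ℕ} (μ : Measure (Fin d → ℝ))
    (hsymm : μ.map (fun ω => -ω) = μ)
    (γ : Fin d → ℕ) (hγ : Odd (∑ i, γ i)) :
    ∫ ω, ∏ i, ω i ^ γ i ∂μ = 0 := by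
  have h2 : ∀ ω : Fin d → ℝ, ∏ i, (-ω) i ^ γ i = - ∏ i, ω i ^ γ i := by
    intro ω
    have hpt : ∀ i, (-ω) i ^ γ i = (-1 : ℝ) ^ γ i * ω i ^ γ i := fun i => by
      rw [Pi.neg_apply, neg_pow]
    rw [Finset.prod_congr rfl (fun i _ => hpt i), Finset.prod_mul_distrib,
      Finset.prod_pow_eq_pow_sum, hγ.neg_one_pow, neg_one_mul]
  have h1 : ∫ ω, ∏ i, ω i ^ γ i ∂μ = ∫ ω, ∏ i, (-ω) i ^ γ i ∂μ := by
    conv_lhs => rw [← hsymm]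
    rw [integral_map measurable_neg.aemeasurable ((monomial_cont d γ).aestronglyMeasurable)]
  have h3 : ∫ ω, ∏ i, ω i ^ γ i ∂μ = - ∫ ω, ∏ i, ω i ^ γ i ∂μ := by
    conv_lhs => rw [h1]
    simp only [h2]
    exact integral_neg _
  linarith

end WronskianAux

open WronskianAux in
/-- **Wronskian matrices of stationary kernels are positive semidefinite.**
Let `μ` be a finite nonnegative measure on `ℝᵈ`, symmetric under `ω ↦ −ω`, with
finite moments up to order `2k`. The Wronskian-type matrix `W`, indexed by
multi-indices `α, β` of total degree at most `k` (encoded as functions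
`Fin d → Fin (k+1)` whose coordinate sum is at most `k`), with entries
`W_{α,β} = 0` when `|α|+|β|` is odd and
`W_{α,β} = ((−1)^{p+|β|}/(α!β!)) ∫ ω^{α+β} dμ` when `|α|+|β| = 2p`,
is symmetric positive semidefinite. -/
theorem wronskian_moment_matrix_posSemidef
    (d k : ℕ) (μ : Measure (Fin d → ℝ)) [IsFiniteMeasure μ]
    (hsymm : μ.map (fun ω => -ω) = μ)
    (hmom : Integrable (fun ω : Fin d → ℝ => ‖ω‖ ^ (2 * k)) μ)
    (W : Matrix {α : Fin d → Fin (k + 1) // ∑ i, (α i : ℕ) ≤ k}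
                {α : Fin d → Fin (k + 1) // ∑ i, (α i : ℕ) ≤ k} ℝ)
    (hW : ∀ α β,
      W α β =
        if Odd ((∑ i, (α.1 i : ℕ)) + ∑ i, (β.1 i : ℕ)) then 0
        else
          ((-1 : ℝ) ^ ((((∑ i, (α.1 i : ℕ)) + ∑ i, (β.1 i : ℕ)) / 2) +
              ∑ i, (β.1 i : ℕ)) /
            ((∏ i, Nat.factorial (α.1 i) : ℕ) * (∏ i, Nat.factorial (β.1 i) : ℕ))) *
          ∫ ω, ∏ i, ω i ^ ((α.1 i : ℕ) + (β.1 i : ℕ)) ∂μ) :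
    W.IsSymm ∧ W.PosSemidef := by
  have hsum2 : ∀ α β : {α : Fin d → Fin (k + 1) // ∑ i, (α i : ℕ) ≤ k}, (∑ i, ((α.1 i : ℕ) + (β.1 i : ℕ))) ≤ 2 * k := by
    intro α β
    rw [Finset.sum_add_distrib]
    have h1 := α.2; have h2 := β.2
    omega
  have hint : ∀ α β : {α : Fin d → Fin (k + 1) // ∑ i, (α i : ℕ) ≤ k},
      Integrable (fun ω => ∏ i, ω i ^ ((α.1 i : ℕ) + (β.1 i : ℕ))) μ :=
    fun α β => monomial_integrable k μ hmom _ (hsum2 α β)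
  have huu : ∀ (α β : {α : Fin d → Fin (k + 1) // ∑ i, (α i : ℕ) ≤ k}) (ω : Fin d → ℝ),
      u d k α ω * u d k β ω =
      (((-1 : ℝ) ^ ((∑ i, (α.1 i : ℕ)) / 2) / ((∏ i, Nat.factorial (α.1 i) : ℕ) : ℝ)) *
       ((-1 : ℝ) ^ ((∑ i, (β.1 i : ℕ)) / 2) / ((∏ i, Nat.factorial (β.1 i) : ℕ) : ℝ))) *
      ∏ i, ω i ^ ((α.1 i : ℕ) + (β.1 i : ℕ)) := by
    intro α β ω
    simp only [u, pow_add, Finset.prod_mul_distrib]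
    ring
  have hintu : ∀ α β : {α : Fin d → Fin (k + 1) // ∑ i, (α i : ℕ) ≤ k}, Integrable (fun ω => u d k α ω * u d k β ω) μ := by
    intro α β
    simpa only [huu] using (hint α β).const_mul _
  have hWint : ∀ α β : {α : Fin d → Fin (k + 1) // ∑ i, (α i : ℕ) ≤ k}, W α β = ∫ ω, u d k α ω * u d k β ω ∂μ := by
    intro α β
    rw [hW]
    simp only [huu]
    rw [integral_const_mul]
    by_cases hodd : Odd ((∑ i, (α.1 i : ℕ)) + ∑ i, (β.1 i : ℕ))
    · rw [if_pos hodd]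
      have hz : ∫ ω, ∏ i, ω i ^ ((α.1 i : ℕ) + (β.1 i : ℕ)) ∂μ = 0 := by
        apply odd_integral_zero μ hsymm
        rw [Finset.sum_add_distrib]; exact hodd
      rw [hz, mul_zero]
    · rw [if_neg hodd]
      rw [div_mul_div_comm, sign_eq _ _ hodd]
  have hsymmW : W.IsSymm := by
    ext α β
    rw [transpose_apply, hWint α β, hWint β α]
    exact integral_congr_ae (Filter.Eventually.of_forall fun ω => mul_comm _ _)
  refine ⟨hsymmW, ?_⟩
  refine Matrix.posSemidef_iff_dotProduct_mulVec.mpr ⟨?_, ?_⟩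
  · rw [Matrix.IsHermitian]
    ext α β
    rw [conjTranspose_apply, star_trivial]
    exact congrFun (congrFun hsymmW α) β
  · intro x
    have hterm : ∀ α β : {α : Fin d → Fin (k + 1) // ∑ i, (α i : ℕ) ≤ k},
        Integrable (fun ω => (x α * u d k α ω) * (x β * u d k β ω)) μ := by
      intro α β
      have heq : (fun ω => (x α * u d k α ω) * (x β * u d k β ω)) =
          fun ω => (x α * x β) * (u d k α ω * u d k β ω) := by
        funext ω; ring
      rw [heq]
      exact (hintu α β).const_mul _
    have hg : ∀ α : {α : Fin d → Fin (k + 1) // ∑ i, (α i : ℕ) ≤ k},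
        Integrable (fun ω => ∑ β : {α : Fin d → Fin (k + 1) // ∑ i, (α i : ℕ) ≤ k}, (x α * u d k α ω) * (x β * u d k β ω)) μ := by
      intro α
      exact integrable_finset_sum _ (fun β _ => hterm α β)
    have key : star x ⬝ᵥ W.mulVec x = ∫ ω, (∑ α : {α : Fin d → Fin (k + 1) // ∑ i, (α i : ℕ) ≤ k}, x α * u d k α ω) ^ 2 ∂μ := by
      have expand : ∀ ω : Fin d → ℝ, (∑ α : {α : Fin d → Fin (k + 1) // ∑ i, (α i : ℕ) ≤ k}, x α * u d k α ω) ^ 2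
          = ∑ α : {α : Fin d → Fin (k + 1) // ∑ i, (α i : ℕ) ≤ k}, ∑ β : {α : Fin d → Fin (k + 1) // ∑ i, (α i : ℕ) ≤ k}, (x α * u d k α ω) * (x β * u d k β ω) := by
        intro ω; rw [sq, Finset.sum_mul_sum]
      simp_rw [expand]
      rw [integral_finset_sum _ (fun α _ => hg α)]
      simp only [dotProduct, mulVec, Pi.star_apply, star_trivial]
      refine Finset.sum_congr rfl fun α _ => ?_
      rw [integral_finset_sum _ (fun β _ => hterm α β), Finset.mul_sum]
      refine Finset.sum_congr rfl fun β _ => ?_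
      rw [hWint α β]
      have heq : (fun ω => (x α * u d k α ω) * (x β * u d k β ω)) =
          fun ω => (x α * x β) * (u d k α ω * u d k β ω) := by
        funext ω; ring
      rw [heq, integral_const_mul]
      ring
    rw [key]
    exact integral_nonneg fun ω => sq_nonneg _
end

section
/- Let μ be a nonzero finite nonnegative measure on ℝᵈ that is symmetric under ω ↦ −ω and absolutely continuous with respect to Lebesgue measure, let k ∈ ℕ, and suppose ∫ ‖ω‖^{2k} dμ(ω) < ∞. Define the real matrix W, indexed by multi-indices α, β ∈ ℕᵈ with |α| ≤ k and |β| ≤ k, by W_{α,β} = 0 if |α| + |β| is odd, and W_{α,β} = ((−1)^{p+|β|}/(α!β!)) ∫ ω^{α+β} dμ(ω) if |α| + |β| = 2p. Then W is symmetric positive definite. -/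
open Matrix MeasureTheory MvPolynomial

section WronskianAux

/-- zero set of a nonzero multivariate polynomial is Lebesgue-null -/
lemma mvpoly_zero_set_null : ∀ (d : ℕ) (P : MvPolynomial (Fin d) ℝ), P ≠ 0 →
    volume {ω : Fin d → ℝ | MvPolynomial.eval ω P = 0} = 0 := by
  intro d
  induction d with
  | zero =>
    intro P hP
    convert measure_empty (μ := (volume : Measure (Fin 0 → ℝ)))
    ext ω
    simp only [Set.mem_setOf_eq, Set.mem_empty_iff_false, iff_false]
    obtain ⟨c, rfl⟩ := MvPolynomial.C_surjective (Fin 0) P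
    simp only [eval_C]
    exact fun h => hP (by rw [show c = 0 from h, map_zero])
  | succ d ih =>
    intro P hP
    set Q : Polynomial (MvPolynomial (Fin d) ℝ) := finSuccEquiv ℝ d P with hQdef
    have hQ : Q ≠ 0 := by
      simp only [hQdef, ne_eq, EmbeddingLike.map_eq_zero_iff]
      exact hP
    set n := Q.natDegree
    set L : MvPolynomial (Fin d) ℝ := Q.coeff n with hL
    have hLne : L ≠ 0 := Polynomial.leadingCoeff_ne_zero.mpr hQ
    have hA : volume {y : Fin d → ℝ | MvPolynomial.eval y L = 0} = 0 := ih L hLne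
    have hmp : MeasurePreserving
        (fun ω : Fin (d+1) → ℝ => (Prod.swap ((MeasurableEquiv.piFinSuccAbove (fun _ => ℝ) 0) ω)))
        volume ((volume : Measure (Fin d → ℝ)).prod (volume : Measure ℝ)) := by
      exact (Measure.measurePreserving_swap).comp
        (volume_preserving_piFinSuccAbove (fun _ : Fin (d+1) => ℝ) 0)
    set T' : Set ((Fin d → ℝ) × ℝ) :=
      {q | Polynomial.eval q.2 (Polynomial.map (MvPolynomial.eval q.1) Q) = 0} with hT'
    have hcont : Continuous (fun q : (Fin d → ℝ) × ℝ =>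
        Polynomial.eval q.2 (Polynomial.map (MvPolynomial.eval q.1) Q)) := by
      have : (fun q : (Fin d → ℝ) × ℝ =>
          Polynomial.eval q.2 (Polynomial.map (MvPolynomial.eval q.1) Q))
          = fun q => MvPolynomial.eval (Fin.cons q.2 q.1) P := by
        funext q
        rw [eval_eq_eval_mv_eval']
      rw [this]
      refine (MvPolynomial.continuous_eval P).comp ?_
      refine continuous_pi fun i => ?_
      refine Fin.cases ?_ (fun j => ?_) i
      · simpa using (continuous_snd : Continuous fun q : (Fin d → ℝ) × ℝ => q.2)
      · exact ((continuous_apply j).comp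
          (continuous_fst : Continuous fun q : (Fin d → ℝ) × ℝ => q.1) : Continuous fun q : (Fin d → ℝ) × ℝ => q.1 j)
    have hT'm : MeasurableSet T' := (isClosed_singleton.preimage hcont : IsClosed _).measurableSet
    have hZ : {ω : Fin (d+1) → ℝ | MvPolynomial.eval ω P = 0}
        = (fun ω : Fin (d+1) → ℝ =>
            (Prod.swap ((MeasurableEquiv.piFinSuccAbove (fun _ => ℝ) 0) ω))) ⁻¹' T' := by
      ext ω
      simp only [Set.mem_setOf_eq, Set.mem_preimage, hT', MeasurableEquiv.piFinSuccAbove,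
        Prod.swap]
      have : ω = Fin.cons (ω 0) (fun j => ω ((0:Fin (d+1)).succAbove j)) := by
        simp [Fin.succAbove_zero]
        exact (Fin.cons_self_tail ω).symm
      conv_lhs => rw [this]
      rw [eval_eq_eval_mv_eval']
      rfl
    rw [hZ, hmp.measure_preimage hT'm.nullMeasurableSet]
    set T : Set ((Fin d → ℝ) × ℝ) :=
      {q | MvPolynomial.eval q.1 L ≠ 0 ∧
        Polynomial.eval q.2 (Polynomial.map (MvPolynomial.eval q.1) Q) = 0} with hT
    have hsub : T' ⊆ ({y | MvPolynomial.eval y L = 0} ×ˢ Set.univ) ∪ T := by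
      intro q hq
      by_cases h : MvPolynomial.eval q.1 L = 0
      · exact Or.inl ⟨h, trivial⟩
      · exact Or.inr ⟨h, hq⟩
    refine measure_mono_null hsub (le_antisymm ?_ (zero_le))
    refine le_trans (measure_union_le _ _) ?_
    have h1 : (volume.prod volume)
        ({y : Fin d → ℝ | MvPolynomial.eval y L = 0} ×ˢ (Set.univ : Set ℝ)) = 0 := by
      rw [Measure.prod_prod, hA, zero_mul]
    have hTm : MeasurableSet T := by
      apply MeasurableSet.inter
      · exact ((isClosed_singleton.preimage
          ((MvPolynomial.continuous_eval L).comp continuous_fst)).measurableSet).compl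
      · exact hT'm
    have h2 : (volume.prod volume) T = 0 := by
      rw [Measure.measure_prod_null hTm]
      have hae : ∀ᵐ y : Fin d → ℝ, ¬ (MvPolynomial.eval y L = 0) := by
        rw [ae_iff]; simpa [not_not] using hA
      filter_upwards [hae] with y hy
      have hmapne : Polynomial.map (MvPolynomial.eval y) Q ≠ 0 := by
        intro hcon
        have := congrArg (fun p => Polynomial.coeff p n) hcon
        simp only [Polynomial.coeff_map, Polynomial.coeff_zero] at this
        exact hy this
      have : (Prod.mk y ⁻¹' T) ⊆ {x : ℝ | (Polynomial.map (MvPolynomial.eval y) Q).IsRoot x} := by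
        intro x hx
        exact hx.2
      exact measure_mono_null this ((Polynomial.finite_setOf_isRoot hmapne).measure_zero _)
    rw [h1, h2, add_zero]

lemma negpow_congr (m n : ℕ) (h : m % 2 = n % 2) : ((-1:ℝ))^m = (-1)^n := by
  rcases Nat.even_or_odd m with hm|hm
  · have hn : Even n := Nat.even_iff.mpr (by have := Nat.even_iff.mp hm; omega)
    rw [hm.neg_one_pow, hn.neg_one_pow]
  · have hn : Odd n := Nat.odd_iff.mpr (by have := Nat.odd_iff.mp hm; omega)
    rw [hm.neg_one_pow, hn.neg_one_pow]

lemma integrable_monomial {d : ℕ} (k : ℕ) (μ : Measure (Fin d → ℝ)) [IsFiniteMeasure μ]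
    (hmom : Integrable (fun ω : Fin d → ℝ => ‖ω‖ ^ (2 * k)) μ)
    (ν : Fin d → ℕ) (hν : ∑ i, ν i ≤ 2 * k) :
    Integrable (fun ω : Fin d → ℝ => ∏ i, ω i ^ ν i) μ := by
  refine Integrable.mono' ((integrable_const (1:ℝ)).add hmom) ?_ (ae_of_all _ fun ω => ?_)
  · exact (continuous_finset_prod _ fun i _ => (continuous_apply i).pow _).aestronglyMeasurable
  · have h1 : ‖∏ i, ω i ^ ν i‖ = ∏ i, |ω i| ^ ν i := by
      rw [Real.norm_eq_abs, Finset.abs_prod]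
      exact Finset.prod_congr rfl fun i _ => abs_pow _ _
    have h2 : ∏ i, |ω i| ^ ν i ≤ ∏ i, ‖ω‖ ^ ν i := by
      refine Finset.prod_le_prod (fun i _ => by positivity) fun i _ => ?_
      exact pow_le_pow_left₀ (abs_nonneg _) (by simpa [Real.norm_eq_abs] using norm_le_pi_norm ω i) _
    have h3 : ∏ i, ‖ω‖ ^ ν i = ‖ω‖ ^ (∑ i, ν i) := by
      rw [← Finset.prod_pow_eq_pow_sum]
    have h4 : ‖ω‖ ^ (∑ i, ν i) ≤ 1 + ‖ω‖ ^ (2 * k) := by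
      rcases le_or_gt ‖ω‖ 1 with hle | hgt
      · exact le_trans (pow_le_one₀ (norm_nonneg _) hle)
          (by nlinarith [pow_nonneg (norm_nonneg ω) (2*k)])
      · exact le_trans (pow_le_pow_right₀ hgt.le hν) (by linarith)
    show ‖∏ i, ω i ^ ν i‖ ≤ 1 + ‖ω‖ ^ (2 * k)
    calc ‖∏ i, ω i ^ ν i‖ = ∏ i, |ω i| ^ ν i := h1
      _ ≤ ‖ω‖ ^ (∑ i, ν i) := h3 ▸ h2
      _ ≤ 1 + ‖ω‖ ^ (2 * k) := h4

lemma prod_X_pow_univ {σ : Type*} [Fintype σ] [DecidableEq σ] (s : σ → ℕ) :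
    (∏ i, (MvPolynomial.X i : MvPolynomial σ ℝ) ^ s i)
      = MvPolynomial.monomial (Finsupp.equivFunOnFinite.symm s) 1 := by
  calc ∏ i, (MvPolynomial.X i : MvPolynomial σ ℝ) ^ s i
      = ∏ i, (MvPolynomial.X i : MvPolynomial σ ℝ) ^ (Finsupp.equivFunOnFinite.symm s) i := by
        simp
    _ = ∏ x ∈ (Finsupp.equivFunOnFinite.symm s).support,
          (MvPolynomial.X x : MvPolynomial σ ℝ) ^ (Finsupp.equivFunOnFinite.symm s) x :=
        (Finset.prod_subset (Finset.subset_univ _) (fun i _ hi => by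
          rw [Finsupp.notMem_support_iff.mp hi, pow_zero])).symm
    _ = MvPolynomial.monomial (Finsupp.equivFunOnFinite.symm s) 1 :=
        MvPolynomial.prod_X_pow_eq_monomial

lemma sum_monomials_ne_zero {σ : Type*} [Fintype σ] [DecidableEq σ] {ι : Type*} [DecidableEq ι]
    (S : Finset ι) (e : ι → σ → ℕ) (he : ∀ a ∈ S, ∀ b ∈ S, e a = e b → a = b)
    (coefs : ι → ℝ) (α₀ : ι) (h₀ : α₀ ∈ S) (hc : coefs α₀ ≠ 0) :
    (∑ α ∈ S, MvPolynomial.C (coefs α) * ∏ i, MvPolynomial.X i ^ (e α i))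
      ≠ (0 : MvPolynomial σ ℝ) := by
  intro hzero
  have hco := congrArg (MvPolynomial.coeff (Finsupp.equivFunOnFinite.symm (e α₀))) hzero
  rw [MvPolynomial.coeff_zero] at hco
  simp only [prod_X_pow_univ, MvPolynomial.coeff_sum] at hco
  rw [Finset.sum_eq_single α₀] at hco
  · rw [MvPolynomial.coeff_C_mul, MvPolynomial.coeff_monomial, if_pos rfl] at hco
    exact hc (by simpa using hco)
  · intro b hb hbne
    rw [MvPolynomial.coeff_C_mul, MvPolynomial.coeff_monomial, if_neg, mul_zero]
    intro heq
    exact hbne (he b hb α₀ h₀ (by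
      have := congrArg (⇑Finsupp.equivFunOnFinite) heq
      simpa using this))
  · exact fun h => absurd h₀ h

lemma entry_symm (a b A B : ℕ) (I J : ℝ) (hIJ : I = J) :
    (if Odd (b + a) then (0:ℝ) else ((-1:ℝ))^((b+a)/2 + a) / ((B:ℝ) * (A:ℝ)) * J)
  = (if Odd (a + b) then (0:ℝ) else ((-1:ℝ))^((a+b)/2 + b) / ((A:ℝ) * (B:ℝ)) * I) := by
  subst hIJ
  by_cases h : Odd (a + b)
  · rw [if_pos h, if_pos (by rwa [add_comm] at h)]
  · rw [if_neg h, if_neg (by rwa [add_comm] at h)]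
    have h2 : ¬ (a + b) % 2 = 1 := fun hc => h (Nat.odd_iff.mpr hc)
    rw [negpow_congr ((b+a)/2 + a) ((a+b)/2 + b) (by omega), mul_comm (B:ℝ) (A:ℝ)]

variable (d k : ℕ)

abbrev WIdx := {α : Fin d → Fin (k + 1) // ∑ i, (α i : ℕ) ≤ k}

variable {d k}

def wNN (α : WIdx d k) : ℕ := ∑ i, (α.1 i : ℕ)

def wFF (α : WIdx d k) : ℕ := ∏ i, Nat.factorial (α.1 i)

lemma wFF_pos (α : WIdx d k) : 0 < wFF α :=
  Finset.prod_pos fun i _ => Nat.factorial_pos _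

noncomputable def wCC (α : WIdx d k) : ℝ := (-1)^(wNN α / 2) / (wFF α : ℝ)

lemma wCC_ne_zero (α : WIdx d k) : wCC α ≠ 0 := by
  apply div_ne_zero
  · exact pow_ne_zero _ (by norm_num)
  · exact Nat.cast_ne_zero.mpr (wFF_pos α).ne'

def wMM (α : WIdx d k) (ω : Fin d → ℝ) : ℝ := ∏ i, ω i ^ (α.1 i : ℕ)

noncomputable def wUU (x : WIdx d k → ℝ) (α : WIdx d k) (ω : Fin d → ℝ) : ℝ :=
  x α * wCC α * wMM α ω

noncomputable def wVV (x : WIdx d k → ℝ) (α β : WIdx d k) (ω : Fin d → ℝ) : ℝ :=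
  if wNN α % 2 = wNN β % 2 then wUU x α ω * wUU x β ω else 0

noncomputable def wGG (x : WIdx d k → ℝ) (r : ℕ) (ω : Fin d → ℝ) : ℝ :=
  ∑ α ∈ Finset.univ.filter (fun α : WIdx d k => wNN α % 2 = r), wUU x α ω

noncomputable def wPoly (x : WIdx d k → ℝ) (r : ℕ) : MvPolynomial (Fin d) ℝ :=
  ∑ α ∈ Finset.univ.filter (fun α : WIdx d k => wNN α % 2 = r),
    MvPolynomial.C (x α * wCC α) * ∏ i, MvPolynomial.X i ^ (α.1 i : ℕ)

lemma wPoly_eval (x : WIdx d k → ℝ) (r : ℕ) (ω : Fin d → ℝ) :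
    MvPolynomial.eval ω (wPoly x r) = wGG x r ω := by
  simp only [wPoly, wGG, wUU, wMM, map_sum]
  refine Finset.sum_congr rfl fun α _ => ?_
  rw [_root_.map_mul, eval_C, _root_.map_prod]
  congr 1
  exact Finset.prod_congr rfl fun i _ => by rw [eval_pow, eval_X]

lemma wPoly_ne_zero (x : WIdx d k → ℝ) (α₀ : WIdx d k) (hx : x α₀ ≠ 0) :
    wPoly x (wNN α₀ % 2) ≠ 0 := by
  unfold wPoly
  exact sum_monomials_ne_zero
    (Finset.univ.filter (fun α : WIdx d k => wNN α % 2 = wNN α₀ % 2))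
    (fun α i => (α.1 i : ℕ))
    (fun a _ b _ hab => Subtype.ext (funext fun i => Fin.val_injective (congrFun hab i)))
    (fun α => x α * wCC α) α₀
    (Finset.mem_filter.mpr ⟨Finset.mem_univ _, rfl⟩)
    (mul_ne_zero hx (wCC_ne_zero α₀))

lemma wVV_eq_of_par (x : WIdx d k → ℝ) (α β : WIdx d k) (hpar : wNN α % 2 = wNN β % 2) :
    wVV x α β = fun ω =>
      (x α * wCC α * (x β * wCC β)) * ∏ i, ω i ^ ((α.1 i : ℕ) + (β.1 i : ℕ)) := by
  funext ω
  simp only [wVV, wUU, wMM, if_pos hpar]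
  rw [show (∏ i, ω i ^ ((α.1 i:ℕ)+(β.1 i:ℕ)))
      = (∏ i, ω i ^ (α.1 i:ℕ)) * ∏ i, ω i ^ (β.1 i:ℕ) from by
    rw [← Finset.prod_mul_distrib]
    exact Finset.prod_congr rfl fun i _ => pow_add _ _ _]
  ring

lemma wNN_sum_le (α β : WIdx d k) : ∑ i, ((α.1 i : ℕ) + (β.1 i : ℕ)) ≤ 2 * k := by
  rw [Finset.sum_add_distrib]
  have h1 := α.2
  have h2 := β.2
  omega

lemma wVV_integrable (μ : Measure (Fin d → ℝ)) [IsFiniteMeasure μ]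
    (hmom : Integrable (fun ω : Fin d → ℝ => ‖ω‖ ^ (2 * k)) μ)
    (x : WIdx d k → ℝ) (α β : WIdx d k) : Integrable (wVV x α β) μ := by
  by_cases hpar : wNN α % 2 = wNN β % 2
  · rw [wVV_eq_of_par x α β hpar]
    exact (integrable_monomial k μ hmom _ (wNN_sum_le α β)).const_mul _
  · have : wVV x α β = fun _ => 0 := funext fun ω => by simp only [wVV, if_neg hpar]
    rw [this]
    exact integrable_const 0

lemma wpair_eq (μ : Measure (Fin d → ℝ)) (x : WIdx d k → ℝ) (α β : WIdx d k) :
    x α * ((if Odd (wNN α + wNN β) then (0:ℝ)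
        else ((-1:ℝ))^((wNN α + wNN β)/2 + wNN β) / ((wFF α : ℝ) * (wFF β : ℝ)) *
          ∫ ω, ∏ i, ω i ^ ((α.1 i : ℕ) + (β.1 i : ℕ)) ∂μ) * x β)
      = ∫ ω, wVV x α β ω ∂μ := by
  by_cases hpar : wNN α % 2 = wNN β % 2
  · have hnotodd : ¬ Odd (wNN α + wNN β) := by rw [Nat.odd_iff]; omega
    rw [if_neg hnotodd, wVV_eq_of_par x α β hpar, integral_const_mul]
    have hsign : ((-1:ℝ))^((wNN α + wNN β)/2 + wNN β) = (-1)^(wNN α / 2) * (-1)^(wNN β / 2) := by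
      rw [← pow_add]
      exact negpow_congr _ _ (by omega)
    rw [hsign]
    simp only [wCC]
    have hffα : (wFF α : ℝ) ≠ 0 := Nat.cast_ne_zero.mpr (wFF_pos α).ne'
    have hffβ : (wFF β : ℝ) ≠ 0 := Nat.cast_ne_zero.mpr (wFF_pos β).ne'
    field_simp
  · have hodd : Odd (wNN α + wNN β) := by rw [Nat.odd_iff]; omega
    rw [if_pos hodd, zero_mul, mul_zero]
    have : wVV x α β = fun _ => 0 := funext fun ω => by simp only [wVV, if_neg hpar]
    rw [this, integral_zero]

lemma wsum_vv (x : WIdx d k → ℝ) (ω : Fin d → ℝ) :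
    ∑ α : WIdx d k, ∑ β : WIdx d k, wVV x α β ω
      = wGG x 0 ω * wGG x 0 ω + wGG x 1 ω * wGG x 1 ω := by
  classical
  have inner : ∀ (r : ℕ) (α : WIdx d k), wNN α % 2 = r →
      ∑ β : WIdx d k, wVV x α β ω
        = ∑ β ∈ Finset.univ.filter (fun β : WIdx d k => wNN β % 2 = r),
            wUU x α ω * wUU x β ω := by
    intro r α hα
    rw [Finset.sum_filter]
    refine Finset.sum_congr rfl fun β _ => ?_
    simp only [wVV, hα]
    by_cases hb : wNN β % 2 = r
    · rw [if_pos hb.symm, if_pos hb]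
    · rw [if_neg (fun hh => hb hh.symm), if_neg hb]
  rw [← Finset.sum_filter_add_sum_filter_not Finset.univ (fun α : WIdx d k => wNN α % 2 = 0)
    (fun α => ∑ β : WIdx d k, wVV x α β ω)]
  have h0 : ∑ α ∈ Finset.univ.filter (fun α : WIdx d k => wNN α % 2 = 0),
      ∑ β : WIdx d k, wVV x α β ω = wGG x 0 ω * wGG x 0 ω := by
    rw [wGG, Finset.sum_mul_sum]
    exact Finset.sum_congr rfl fun α hα => inner 0 α (Finset.mem_filter.mp hα).2
  have hfilter : Finset.univ.filter (fun α : WIdx d k => ¬ wNN α % 2 = 0)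
      = Finset.univ.filter (fun α : WIdx d k => wNN α % 2 = 1) := by
    refine Finset.filter_congr fun α _ => ?_
    constructor
    · intro h; omega
    · intro h; omega
  have h1 : ∑ α ∈ Finset.univ.filter (fun α : WIdx d k => ¬ wNN α % 2 = 0),
      ∑ β : WIdx d k, wVV x α β ω = wGG x 1 ω * wGG x 1 ω := by
    rw [hfilter, wGG, Finset.sum_mul_sum]
    exact Finset.sum_congr rfl fun α hα => inner 1 α (Finset.mem_filter.mp hα).2
  rw [h0, h1]

end WronskianAux

/-- **Wronskian matrices are positive definite for measures with a density.**
Let `μ` be a nonzero finite nonnegative measure on `ℝᵈ`, symmetric under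
`ω ↦ −ω`, absolutely continuous with respect to Lebesgue measure, with finite
moments up to order `2k`. The Wronskian-type matrix `W`, indexed by
multi-indices `α, β` of total degree at most `k` (encoded as functions
`Fin d → Fin (k+1)` whose coordinate sum is at most `k`), with entries
`W_{α,β} = 0` when `|α|+|β|` is odd and
`W_{α,β} = ((−1)^{p+|β|}/(α!β!)) ∫ ω^{α+β} dμ` when `|α|+|β| = 2p`,
is symmetric positive definite. -/
theorem wronskian_moment_matrix_posDef
    (d k : ℕ) (μ : Measure (Fin d → ℝ)) [IsFiniteMeasure μ]
    (hμne : μ ≠ 0)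
    (hsymm : μ.map (fun ω => -ω) = μ)
    (hac : μ ≪ (volume : Measure (Fin d → ℝ)))
    (hmom : Integrable (fun ω : Fin d → ℝ => ‖ω‖ ^ (2 * k)) μ)
    (W : Matrix {α : Fin d → Fin (k + 1) // ∑ i, (α i : ℕ) ≤ k}
                {α : Fin d → Fin (k + 1) // ∑ i, (α i : ℕ) ≤ k} ℝ)
    (hW : ∀ α β,
      W α β =
        if Odd ((∑ i, (α.1 i : ℕ)) + ∑ i, (β.1 i : ℕ)) then 0
        else
          ((-1 : ℝ) ^ ((((∑ i, (α.1 i : ℕ)) + ∑ i, (β.1 i : ℕ)) / 2) +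
              ∑ i, (β.1 i : ℕ)) /
            ((∏ i, Nat.factorial (α.1 i) : ℕ) * (∏ i, Nat.factorial (β.1 i) : ℕ))) *
          ∫ ω, ∏ i, ω i ^ ((α.1 i : ℕ) + (β.1 i : ℕ)) ∂μ) :
    W.IsSymm ∧ W.PosDef := by
  classical
  have hWsymm : W.IsSymm := by
    refine Matrix.IsSymm.ext fun α β => ?_
    rw [hW β α, hW α β]
    exact entry_symm (wNN α) (wNN β) (wFF α) (wFF β) _ _ (by
      congr 1
      funext ω
      exact Finset.prod_congr rfl fun i _ => by rw [Nat.add_comm])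
  refine ⟨hWsymm, Matrix.posDef_iff_dotProduct_mulVec.mpr ⟨?_, ?_⟩⟩
  · -- IsHermitian
    ext i j
    rw [Matrix.conjTranspose_apply, star_trivial]
    exact Matrix.IsSymm.ext_iff.mp hWsymm i j
  · intro x hx
    rw [star_trivial]
    have hcalc : x ⬝ᵥ W *ᵥ x
        = ∫ ω, (wGG x 0 ω * wGG x 0 ω + wGG x 1 ω * wGG x 1 ω) ∂μ := by
      calc x ⬝ᵥ W *ᵥ x = ∑ α, x α * ∑ β, W α β * x β := rfl
        _ = ∑ α, ∑ β, x α * (W α β * x β) := by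
            exact Finset.sum_congr rfl fun α _ => Finset.mul_sum _ _ _
        _ = ∑ α, ∑ β, ∫ ω, wVV x α β ω ∂μ := by
            refine Finset.sum_congr rfl fun α _ => Finset.sum_congr rfl fun β _ => ?_
            rw [hW α β]
            exact wpair_eq μ x α β
        _ = ∑ α, ∫ ω, ∑ β, wVV x α β ω ∂μ := by
            refine Finset.sum_congr rfl fun α _ =>
              (integral_finset_sum _ fun β _ => wVV_integrable μ hmom x α β).symm
        _ = ∫ ω, ∑ α, ∑ β, wVV x α β ω ∂μ :=
            (integral_finset_sum _ fun α _ =>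
              integrable_finset_sum _ fun β _ => wVV_integrable μ hmom x α β).symm
        _ = ∫ ω, (wGG x 0 ω * wGG x 0 ω + wGG x 1 ω * wGG x 1 ω) ∂μ :=
            congrArg (integral μ) (funext fun ω => wsum_vv x ω)
    rw [hcalc]
    have hQint : Integrable (fun ω => wGG x 0 ω * wGG x 0 ω + wGG x 1 ω * wGG x 1 ω) μ := by
      rw [show (fun ω => wGG x 0 ω * wGG x 0 ω + wGG x 1 ω * wGG x 1 ω)
          = fun ω => ∑ α : WIdx d k, ∑ β : WIdx d k, wVV x α β ω from
        funext fun ω => (wsum_vv x ω).symm]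
      exact integrable_finset_sum _ fun α _ =>
        integrable_finset_sum _ fun β _ => wVV_integrable μ hmom x α β
    have hQnn : (0 : (Fin d → ℝ) → ℝ)
        ≤ fun ω => wGG x 0 ω * wGG x 0 ω + wGG x 1 ω * wGG x 1 ω :=
      fun ω => add_nonneg (mul_self_nonneg _) (mul_self_nonneg _)
    obtain ⟨α₀, hα₀⟩ : ∃ α, x α ≠ 0 := by
      by_contra h
      push_neg at h
      exact hx (funext h)
    have hGne : wPoly x (wNN α₀ % 2) ≠ 0 := wPoly_ne_zero x α₀ hα₀
    have hzero_sub : {ω : Fin d → ℝ | wGG x 0 ω * wGG x 0 ω + wGG x 1 ω * wGG x 1 ω = 0}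
        ⊆ {ω | MvPolynomial.eval ω (wPoly x (wNN α₀ % 2)) = 0} := by
      intro ω hω
      have h0 : wGG x 0 ω * wGG x 0 ω + wGG x 1 ω * wGG x 1 ω = 0 := hω
      have hg0 : wGG x 0 ω = 0 := by
        nlinarith [mul_self_nonneg (wGG x 0 ω), mul_self_nonneg (wGG x 1 ω)]
      have hg1 : wGG x 1 ω = 0 := by
        nlinarith [mul_self_nonneg (wGG x 0 ω), mul_self_nonneg (wGG x 1 ω)]
      show MvPolynomial.eval ω (wPoly x (wNN α₀ % 2)) = 0
      rw [wPoly_eval]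
      rcases Nat.mod_two_eq_zero_or_one (wNN α₀) with h|h <;> rw [h] <;> assumption
    have hμzero : μ {ω : Fin d → ℝ | wGG x 0 ω * wGG x 0 ω + wGG x 1 ω * wGG x 1 ω = 0} = 0 :=
      measure_mono_null hzero_sub (hac (mvpoly_zero_set_null d _ hGne))
    have hsupp : 0 < μ (Function.support
        (fun ω => wGG x 0 ω * wGG x 0 ω + wGG x 1 ω * wGG x 1 ω)) := by
      by_contra hcon
      have h0 : μ (Function.support
          (fun ω => wGG x 0 ω * wGG x 0 ω + wGG x 1 ω * wGG x 1 ω)) = 0 :=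
        le_antisymm (not_lt.mp hcon) (zero_le)
      have hc : (Function.support
          (fun ω => wGG x 0 ω * wGG x 0 ω + wGG x 1 ω * wGG x 1 ω))ᶜ
          = {ω : Fin d → ℝ | wGG x 0 ω * wGG x 0 ω + wGG x 1 ω * wGG x 1 ω = 0} := by
        ext ω
        simp [Function.mem_support, not_not]
      have hle := measure_union_le (μ := μ)
        (Function.support (fun ω => wGG x 0 ω * wGG x 0 ω + wGG x 1 ω * wGG x 1 ω))
        (Function.support (fun ω => wGG x 0 ω * wGG x 0 ω + wGG x 1 ω * wGG x 1 ω))ᶜ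
      rw [Set.union_compl_self, hc, h0, hμzero, add_zero] at hle
      exact hμne (Measure.measure_univ_eq_zero.mp (le_antisymm hle (zero_le)))
    exact (integral_pos_iff_support_of_nonneg hQnn hQint).mpr hsupp
end

section
/- Let L be a symmetric real n×n matrix, V a real n×p matrix of full column rank with 1 ≤ p < n, A a symmetric real p×p matrix, and σ² > 0, and suppose the saddle-point matrix S = [[L + σ²I, V], [Vᵀ, 0]] is invertible. Then S′ = [[L + VAVᵀ + σ²I, V], [Vᵀ, 0]] is also invertible, and for every y ∈ ℝⁿ the two systems have the same solution: if S(α; β) = (y; 0) then S′(α; β) = (y; 0). Consequently, for every l ∈ ℝⁿ and v ∈ ℝᵖ, the predictive means agree: ((l + VAv)ᵀ, vᵀ) S′⁻¹ (y; 0) = (lᵀ, vᵀ) S⁻¹ (y; 0). -/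
/-!
Adding `V A Vᵀ` to the upper-left block amounts to multiplying the saddle-point matrix on
the left by the unipotent block matrix `E = [[1, V A], [0, 1]]`. Since `E` is invertible and
fixes every vector of the form `(y; 0)`, both systems have the same solution `(α; β)`; its
constraint row says `Vᵀ α = 0`, so the extra term `V A v` of the test vector does not see it.
-/

open Matrix

namespace Matrix

variable {R : Type*} {m k : Type*} [Fintype m] [Fintype k]

theorem isUnit_fromBlocks_one_zero_one [DecidableEq m] [DecidableEq k] [CommRing R]
    (X : Matrix m k R) : IsUnit (fromBlocks (1 : Matrix m m R) X 0 (1 : Matrix k k R)) := by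
  rw [isUnit_iff_isUnit_det, det_fromBlocks_zero₂₁, det_one, det_one, mul_one]
  exact isUnit_one

theorem fromBlocks_one_zero_one_mulVec_sumElim_zero [DecidableEq m] [DecidableEq k] [Ring R]
    (X : Matrix m k R) (y : m → R) :
    fromBlocks (1 : Matrix m m R) X 0 (1 : Matrix k k R) *ᵥ Sum.elim y 0 = Sum.elim y 0 := by
  simp [fromBlocks_mulVec]

theorem fromBlocks_add_mul_mul_eq_fromBlocks_one_zero_one_mul [DecidableEq m] [DecidableEq k]
    [Ring R] (P : Matrix m m R) (B : Matrix m k R) (A : Matrix k k R) (C : Matrix k m R) :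
    fromBlocks (P + B * A * C) B C 0 = fromBlocks 1 (B * A) 0 1 * fromBlocks P B C 0 := by
  simp [fromBlocks_multiply, Matrix.mul_assoc, add_comm]

theorem mulVec_eq_zero_of_fromBlocks_mulVec_eq_sumElim_zero [Ring R] {P : Matrix m m R}
    {B : Matrix m k R} {C : Matrix k m R} {α y : m → R} {β : k → R}
    (h : fromBlocks P B C 0 *ᵥ Sum.elim α β = Sum.elim y 0) : C *ᵥ α = 0 := by
  simpa [fromBlocks_mulVec] using congrArg (· ∘ Sum.inr) h

theorem sumElim_add_mulVec_dotProduct_sumElim [CommRing R] (V : Matrix m k R) (l α : m → R)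
    (w v β : k → R) (hα : Vᵀ *ᵥ α = 0) :
    Sum.elim (l + V *ᵥ w) v ⬝ᵥ Sum.elim α β = Sum.elim l v ⬝ᵥ Sum.elim α β := by
  rw [sumElim_dotProduct_sumElim, sumElim_dotProduct_sumElim, add_dotProduct,
    dotProduct_comm (V *ᵥ w), dotProduct_mulVec, ← mulVec_transpose, hα, zero_dotProduct,
    add_zero]

theorem inv_mulVec_eq_of_mulVec_eq [DecidableEq m] [CommRing R] {M : Matrix m m R}
    (hM : IsUnit M) {x y : m → R} (h : M *ᵥ x = y) : M⁻¹ *ᵥ y = x := by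
  rw [← h, mulVec_mulVec, nonsing_inv_mul M ((isUnit_iff_isUnit_det M).mp hM), one_mulVec]

end Matrix

theorem prediction_equivalence_kernel_plus_basis_term_general
    (n p : ℕ)
    (L : Matrix (Fin n) (Fin n) ℝ)
    (V : Matrix (Fin n) (Fin p) ℝ)
    (A : Matrix (Fin p) (Fin p) ℝ)
    (σ2 : ℝ)
    (hS : IsUnit (fromBlocks (L + σ2 • 1) V Vᵀ (0 : Matrix (Fin p) (Fin p) ℝ))) :
    IsUnit (fromBlocks (L + V * A * Vᵀ + σ2 • 1) V Vᵀ
        (0 : Matrix (Fin p) (Fin p) ℝ)) ∧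
    (∀ (y α : Fin n → ℝ) (β : Fin p → ℝ),
      (fromBlocks (L + σ2 • 1) V Vᵀ (0 : Matrix (Fin p) (Fin p) ℝ)) *ᵥ
          Sum.elim α β = Sum.elim y (0 : Fin p → ℝ) →
      (fromBlocks (L + V * A * Vᵀ + σ2 • 1) V Vᵀ
          (0 : Matrix (Fin p) (Fin p) ℝ)) *ᵥ
          Sum.elim α β = Sum.elim y (0 : Fin p → ℝ)) ∧
    ∀ (y l : Fin n → ℝ) (v : Fin p → ℝ),
      Sum.elim (l + V *ᵥ (A *ᵥ v)) v ⬝ᵥ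
          ((fromBlocks (L + V * A * Vᵀ + σ2 • 1) V Vᵀ
              (0 : Matrix (Fin p) (Fin p) ℝ))⁻¹ *ᵥ
            Sum.elim y (0 : Fin p → ℝ))
        = Sum.elim l v ⬝ᵥ
          ((fromBlocks (L + σ2 • 1) V Vᵀ (0 : Matrix (Fin p) (Fin p) ℝ))⁻¹ *ᵥ
            Sum.elim y (0 : Fin p → ℝ)) := by
  set S := fromBlocks (L + σ2 • 1) V Vᵀ (0 : Matrix (Fin p) (Fin p) ℝ)
  have hS'_eq : fromBlocks (L + V * A * Vᵀ + σ2 • 1) V Vᵀ 0 = fromBlocks 1 (V * A) 0 1 * S := by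
    rw [add_right_comm, fromBlocks_add_mul_mul_eq_fromBlocks_one_zero_one_mul]
  have hS' := hS'_eq ▸ (isUnit_fromBlocks_one_zero_one (V * A)).mul hS
  have hsame : ∀ (y α : Fin n → ℝ) (β : Fin p → ℝ), S *ᵥ Sum.elim α β = Sum.elim y 0 →
      fromBlocks (L + V * A * Vᵀ + σ2 • 1) V Vᵀ 0 *ᵥ Sum.elim α β = Sum.elim y 0 := by
    intro y α β h
    rw [hS'_eq, ← mulVec_mulVec, h, fromBlocks_one_zero_one_mulVec_sumElim_zero]
  refine ⟨hS', hsame, fun y l v => ?_⟩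
  obtain ⟨α, β, hx⟩ : ∃ α β, S⁻¹ *ᵥ Sum.elim y 0 = Sum.elim α β :=
    ⟨_, _, (Sum.elim_comp_inl_inr _).symm⟩
  have hSx : S *ᵥ Sum.elim α β = Sum.elim y 0 := by
    rw [← hx, mulVec_mulVec, mul_nonsing_inv S ((isUnit_iff_isUnit_det S).mp hS), one_mulVec]
  rw [inv_mulVec_eq_of_mulVec_eq hS' (hsame y α β hSx), hx]
  exact sumElim_add_mulVec_dotProduct_sumElim V l α _ v β
    (mulVec_eq_zero_of_fromBlocks_mulVec_eq_sumElim_zero hSx)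

/-- **Prediction-equivalence under kernel modification along the basis.**
Let `L ∈ ℝ^{n×n}` be symmetric, `V ∈ ℝ^{n×p}` of full column rank
(`1 ≤ p < n`), `A ∈ ℝ^{p×p}` symmetric, `σ² > 0`, and suppose the saddle-point
matrix `S = [[L + σ²I, V], [Vᵀ, 0]]` is invertible. Then
`S′ = [[L + VAVᵀ + σ²I, V], [Vᵀ, 0]]` is invertible, both systems have the same
solution for right-hand side `(y; 0)`, and the predictive means agree:
`((l + VAv)ᵀ, vᵀ) S′⁻¹ (y; 0) = (lᵀ, vᵀ) S⁻¹ (y; 0)`. -/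
theorem prediction_equivalence_kernel_plus_basis_term
    (n p : ℕ) (hp : 1 ≤ p) (hpn : p < n)
    (L : Matrix (Fin n) (Fin n) ℝ) (hL : L.IsSymm)
    (V : Matrix (Fin n) (Fin p) ℝ) (hV : V.rank = p)
    (A : Matrix (Fin p) (Fin p) ℝ) (hA : A.IsSymm)
    (σ2 : ℝ) (hσ2 : 0 < σ2)
    (hS : IsUnit (fromBlocks (L + σ2 • 1) V Vᵀ (0 : Matrix (Fin p) (Fin p) ℝ))) :
    IsUnit (fromBlocks (L + V * A * Vᵀ + σ2 • 1) V Vᵀ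
        (0 : Matrix (Fin p) (Fin p) ℝ)) ∧
    (∀ (y α : Fin n → ℝ) (β : Fin p → ℝ),
      (fromBlocks (L + σ2 • 1) V Vᵀ (0 : Matrix (Fin p) (Fin p) ℝ)) *ᵥ
          Sum.elim α β = Sum.elim y (0 : Fin p → ℝ) →
      (fromBlocks (L + V * A * Vᵀ + σ2 • 1) V Vᵀ
          (0 : Matrix (Fin p) (Fin p) ℝ)) *ᵥ
          Sum.elim α β = Sum.elim y (0 : Fin p → ℝ)) ∧
    ∀ (y l : Fin n → ℝ) (v : Fin p → ℝ),
      Sum.elim (l + V *ᵥ (A *ᵥ v)) v ⬝ᵥ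
          ((fromBlocks (L + V * A * Vᵀ + σ2 • 1) V Vᵀ
              (0 : Matrix (Fin p) (Fin p) ℝ))⁻¹ *ᵥ
            Sum.elim y (0 : Fin p → ℝ))
        = Sum.elim l v ⬝ᵥ
          ((fromBlocks (L + σ2 • 1) V Vᵀ (0 : Matrix (Fin p) (Fin p) ℝ))⁻¹ *ᵥ
            Sum.elim y (0 : Fin p → ℝ)) :=
  prediction_equivalence_kernel_plus_basis_term_general n p L V A σ2 hS
end

section
/- Let V be a real n×p matrix of full column rank with 1 ≤ p ≤ n, let C be a real n×n matrix, and let B₀, B₁ be symmetric real n×n matrices satisfying the first two master equations VVᵀB₀ = 0 and VVᵀB₁ + CB₀ = I. Then VᵀB₀ = 0, B₀VVᵀ = 0, VVᵀB₁VVᵀ = VVᵀ, and VᵀB₁V = I_p. -/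
/-!
Full column rank gives `V` a left inverse `L`, so `V` cancels on the left and `Vᵀ` on the right.
Transposing `VVᵀB₀ = 0` with `B₀` symmetric gives `B₀VVᵀ = 0`, which kills the `CB₀` term once the
second equation is multiplied by `VVᵀ` on the right; sandwiching the result between `L` and `Lᵀ`
gives `VᵀB₁V = I`.
-/

open Matrix

namespace Matrix

theorem isUnit_of_rank_eq_card {n K : Type*} [Fintype n] [DecidableEq n] [Field K]
    {A : Matrix n n K} (hA : A.rank = Fintype.card n) : IsUnit A := by
  have hrange : LinearMap.range A.mulVecLin = ⊤ :=
    Submodule.eq_top_of_finrank_eq (by rw [← rank, hA, Module.finrank_fintype_fun_eq_card])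
  rw [← mulVec_injective_iff_isUnit]
  exact LinearMap.injective_iff_surjective.mpr (LinearMap.range_eq_top.mp hrange)

/-- A matrix of full column rank has the left inverse `(VᵀV)⁻¹Vᵀ`. -/
theorem exists_mul_eq_one_of_rank_eq_card_width {m n K : Type*} [Fintype m] [Fintype n]
    [DecidableEq n] [Field K] [LinearOrder K] [IsStrictOrderedRing K]
    {V : Matrix m n K} (hV : V.rank = Fintype.card n) : ∃ L : Matrix n m K, L * V = 1 := by
  have hunit : IsUnit (Vᵀ * V) := isUnit_of_rank_eq_card (by rw [rank_transpose_mul_self, hV])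
  refine ⟨(Vᵀ * V)⁻¹ * Vᵀ, ?_⟩
  rw [Matrix.mul_assoc, nonsing_inv_mul _ ((isUnit_iff_isUnit_det _).mp hunit)]

end Matrix

theorem master_equation_consequences_general
    (n p : ℕ)
    (V : Matrix (Fin n) (Fin p) ℝ) (hV : V.rank = p)
    (C B0 B1 : Matrix (Fin n) (Fin n) ℝ)
    (hB0 : B0.IsSymm)
    (h0 : V * Vᵀ * B0 = 0) (h1 : V * Vᵀ * B1 + C * B0 = 1) :
    Vᵀ * B0 = 0 ∧
    B0 * (V * Vᵀ) = 0 ∧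
    V * Vᵀ * B1 * (V * Vᵀ) = V * Vᵀ ∧
    Vᵀ * B1 * V = 1 := by
  obtain ⟨L, hL⟩ := exists_mul_eq_one_of_rank_eq_card_width (hV.trans (Fintype.card_fin p).symm)
  have hLt : Vᵀ * Lᵀ = 1 := by rw [← transpose_mul, hL, transpose_one]
  have hB0V : B0 * (V * Vᵀ) = 0 := by
    simpa [hB0.eq, Matrix.mul_assoc] using congrArg transpose h0
  have hB1 : V * Vᵀ * B1 * (V * Vᵀ) = V * Vᵀ := by
    simpa [Matrix.add_mul, Matrix.mul_assoc, hB0V] using congrArg (· * (V * Vᵀ)) h1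
  refine ⟨?_, hB0V, hB1, ?_⟩
  · calc Vᵀ * B0 = L * V * (Vᵀ * B0) := by rw [hL, Matrix.one_mul]
      _ = L * (V * Vᵀ * B0) := by simp only [Matrix.mul_assoc]
      _ = 0 := by rw [h0, Matrix.mul_zero]
  · calc Vᵀ * B1 * V = L * V * (Vᵀ * B1 * V) * (Vᵀ * Lᵀ) := by
          rw [hL, hLt, Matrix.one_mul, Matrix.mul_one]
      _ = L * (V * Vᵀ * B1 * (V * Vᵀ)) * Lᵀ := by simp only [Matrix.mul_assoc]
      _ = 1 := by rw [hB1, Matrix.mul_assoc, Matrix.mul_assoc, hLt, Matrix.mul_one, hL]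

/-- **Consequences of the first two master equations.**
Let `V ∈ ℝ^{n×p}` have full column rank (`1 ≤ p ≤ n`), `C ∈ ℝ^{n×n}`, and let
`B₀, B₁` be symmetric matrices with `VVᵀB₀ = 0` and `VVᵀB₁ + CB₀ = I`. Then
`VᵀB₀ = 0`, `B₀VVᵀ = 0`, `VVᵀB₁VVᵀ = VVᵀ`, and `VᵀB₁V = I_p`. -/
theorem master_equation_consequences
    (n p : ℕ) (hp : 1 ≤ p) (hpn : p ≤ n)
    (V : Matrix (Fin n) (Fin p) ℝ) (hV : V.rank = p)
    (C B0 B1 : Matrix (Fin n) (Fin n) ℝ)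
    (hB0 : B0.IsSymm) (hB1 : B1.IsSymm)
    (h0 : V * Vᵀ * B0 = 0) (h1 : V * Vᵀ * B1 + C * B0 = 1) :
    Vᵀ * B0 = 0 ∧
    B0 * (V * Vᵀ) = 0 ∧
    V * Vᵀ * B1 * (V * Vᵀ) = V * Vᵀ ∧
    Vᵀ * B1 * V = 1 :=
  master_equation_consequences_general n p V hV C B0 B1 hB0 h0 h1
end
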